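/- arXiv:1508.03602 — 6 statements merged into one kernel-verified Lean document; each statement's English description precedes it below -/
import Mathlib

section
/- Let G(X) = c(X - β_1)···(X - β_n) be a polynomial of degree n with integer coefficients and nonzero discriminant D. Then the Mahler measure satisfies M(G) ≥ (|D|/n^n)^{1/(2n-2)}. -/
/-!
The discriminant is `c^(2n-2) · det(V)^2`, where `V` is the Vandermonde matrix of the roots.
Hadamard's inequality bounds `|det V|` by the product of the Euclidean lengths of its rows, and the
row `(1, βᵢ, …, βᵢ^(n-1))` has length at most `√n · max(1, |βᵢ|)^(n-1)`. Hence
`|D| ≤ nⁿ · M(G)^(2n-2)`.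
-/

open Finset Polynomial

theorem OrthonormalBasis.norm_det_le_prod_norm {𝕜 E : Type*} [RCLike 𝕜] [NormedAddCommGroup E]
    [InnerProductSpace 𝕜 E] {n : ℕ} (e : OrthonormalBasis (Fin n) 𝕜 E) (v : Fin n → E) :
    ‖e.toBasis.det v‖ ≤ ∏ i, ‖v i‖ := by
  have : FiniteDimensional 𝕜 E := e.toBasis.finiteDimensional_of_finite
  have hdim : Module.finrank 𝕜 E = Fintype.card (Fin n) := Module.finrank_eq_card_basis e.toBasis
  -- `v` is triangular in its own Gram–Schmidt basis `b`, with diagonal entries `⟪b i, v i⟫`.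
  set b := InnerProductSpace.gramSchmidtOrthonormalBasis hdim v
  have hchange : e.toBasis.det v = e.toBasis.det b * b.toBasis.det v := by
    conv_lhs => rw [e.toBasis.det.eq_smul_basis_det b.toBasis]
    simp
  rw [hchange, norm_mul, e.det_to_matrix_orthonormalBasis b, one_mul,
    InnerProductSpace.gramSchmidtOrthonormalBasis_det, norm_prod]
  gcongr with i
  calc ‖inner 𝕜 (b i) (v i)‖ ≤ ‖b i‖ * ‖v i‖ := norm_inner_le_norm _ _
    _ = ‖v i‖ := by rw [b.orthonormal.1 i, one_mul]

theorem Matrix.norm_det_le_prod_norm_row {𝕜 : Type*} [RCLike 𝕜] {n : ℕ}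
    (A : Matrix (Fin n) (Fin n) 𝕜) : ‖A.det‖ ≤ ∏ i, ‖WithLp.toLp 2 (A i)‖ := by
  have h := (EuclideanSpace.basisFun (Fin n) 𝕜).norm_det_le_prod_norm
    (fun i => WithLp.toLp 2 (A i))
  rwa [EuclideanSpace.basisFun_toBasis, Module.Basis.det_apply, ← Matrix.det_transpose] at h

theorem Matrix.norm_vandermonde_row_sq_le {𝕜 : Type*} [RCLike 𝕜] {n : ℕ} (v : Fin n → 𝕜)
    (i : Fin n) :
    ‖WithLp.toLp 2 (vandermonde v i)‖ ^ 2 ≤ n * max 1 ‖v i‖ ^ (2 * (n - 1)) := by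
  rw [EuclideanSpace.norm_sq_eq]
  calc ∑ j : Fin n, ‖v i ^ (j : ℕ)‖ ^ 2 ≤ ∑ _j : Fin n, max 1 ‖v i‖ ^ (2 * (n - 1)) := by
        gcongr with j
        rw [norm_pow, ← pow_mul, mul_comm]
        calc ‖v i‖ ^ (2 * (j : ℕ)) ≤ max 1 ‖v i‖ ^ (2 * (j : ℕ)) := by
              gcongr; exact le_max_right _ _
          _ ≤ max 1 ‖v i‖ ^ (2 * (n - 1)) := pow_le_pow_right₀ (le_max_left _ _) (by omega)
    _ = n * max 1 ‖v i‖ ^ (2 * (n - 1)) := by simp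

theorem Matrix.norm_det_vandermonde_sq_le {𝕜 : Type*} [RCLike 𝕜] {n : ℕ} (v : Fin n → 𝕜) :
    ‖(vandermonde v).det‖ ^ 2 ≤ n ^ n * (∏ i, max 1 ‖v i‖) ^ (2 * (n - 1)) := by
  calc ‖(vandermonde v).det‖ ^ 2 ≤ ∏ i, ‖WithLp.toLp 2 (vandermonde v i)‖ ^ 2 := by
        rw [prod_pow]; gcongr; exact norm_det_le_prod_norm_row _
    _ ≤ ∏ i, ((n : ℝ) * max 1 ‖v i‖ ^ (2 * (n - 1))) := by
        gcongr with i; exact norm_vandermonde_row_sq_le v i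
    _ = n ^ n * (∏ i, max 1 ‖v i‖) ^ (2 * (n - 1)) := by
        rw [prod_mul_distrib, prod_pow]; simp

theorem Matrix.det_vandermonde_sq {R : Type*} [CommRing R] {n : ℕ} (v : Fin n → R) :
    (vandermonde v).det ^ 2 =
      ∏ p ∈ univ.filter (fun p : Fin n × Fin n => p.1 < p.2), (v p.1 - v p.2) ^ 2 := by
  have hpairs : ∏ p ∈ univ.filter (fun p : Fin n × Fin n => p.1 < p.2), (v p.1 - v p.2) ^ 2 =
      ∏ i, ∏ j ∈ Ioi i, (v i - v j) ^ 2 := by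
    rw [prod_sigma']
    refine prod_nbij' (fun p => ⟨p.1, p.2⟩) (fun p => (p.1, p.2)) ?_ ?_ ?_ ?_ ?_ <;> simp
  rw [hpairs, det_vandermonde, ← prod_pow]
  refine prod_congr rfl fun i _ => ?_
  rw [← prod_pow]
  exact prod_congr rfl fun j _ => by ring

theorem mahler_measure_ge_disc_general (n : ℕ) (hn : 2 ≤ n) (c : ℤ) (β : Fin n → ℂ)
    (D : ℂ)
    (hD : D = (c : ℂ) ^ (2 * n - 2) *
      ∏ p ∈ Finset.univ.filter (fun p : Fin n × Fin n => p.1 < p.2), (β p.1 - β p.2) ^ 2) :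
    (‖D‖ / (n : ℝ) ^ (n : ℕ)) ^ ((1 : ℝ) / (2 * n - 2)) ≤
      |(c : ℝ)| * ∏ i, max 1 (‖β i‖) := by
  have hdisc : ‖D‖ ≤ n ^ n * (|(c : ℝ)| * ∏ i, max 1 ‖β i‖) ^ (2 * n - 2) := by
    rw [hD, ← Matrix.det_vandermonde_sq, norm_mul, norm_pow, norm_pow, Complex.norm_intCast,
      mul_pow, mul_left_comm, show 2 * n - 2 = 2 * (n - 1) by omega]
    gcongr
    exact Matrix.norm_det_vandermonde_sq_le β
  have hexp : ((2 * n - 2 : ℕ) : ℝ) = 2 * n - 2 := by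
    rw [Nat.cast_sub (by omega)]; push_cast; ring
  rw [one_div, ← hexp, Real.rpow_inv_le_iff_of_pos (by positivity) (by positivity)
    (by norm_cast; omega), Real.rpow_natCast, div_le_iff₀ (by positivity), mul_comm]
  exact hdisc

/-- (Mahler) If `G(X) = c (X - β₁) ⋯ (X - βₙ)` is a polynomial of degree `n`
with integer coefficients and nonzero discriminant
`D = c^(2n-2) ∏_{i<j} (β_i - β_j)^2`, then its Mahler measure
`M(G) = |c| ∏ max(1, |β_i|)` satisfies `M(G) ≥ (|D| / n^n)^(1/(2n-2))`. -/
theorem mahler_measure_ge_disc (n : ℕ) (hn : 2 ≤ n) (c : ℤ) (hc : c ≠ 0) (β : Fin n → ℂ)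
    (G : Polynomial ℤ)
    (hG : G.map (Int.castRingHom ℂ) = C (c : ℂ) * ∏ i, (X - C (β i)))
    (D : ℂ)
    (hD : D = (c : ℂ) ^ (2 * n - 2) *
      ∏ p ∈ Finset.univ.filter (fun p : Fin n × Fin n => p.1 < p.2), (β p.1 - β p.2) ^ 2)
    (hD0 : D ≠ 0) :
    (‖D‖ / (n : ℝ) ^ (n : ℕ)) ^ ((1 : ℝ) / (2 * n - 2)) ≤
      |(c : ℝ)| * ∏ i, max 1 (‖β i‖) :=
  mahler_measure_ge_disc_general n hn c β D hD
end

section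
/- Let f(X) = a_n X^n + ... + a_1 X + a_0 be an irreducible polynomial of degree n with integer coefficients, discriminant D, Mahler measure M(f), and naive height H(f). If α is a root of f, then 2^{-(n-1)^2} · |D| / M(f)^{2n-2} ≤ |f'(α)| ≤ (n(n+1)/2) · H(f) · max(1, |α|)^{n-1}. -/
/-!
Write `f = aₙ ∏ (X - αᵢ)`. At a root `α = α_j` one has `f'(α) = aₙ ∏_{k ≠ j} (α_j - α_k)`, while
`|D| = |aₙ|^(2n-2) ∏_i ∏_{k ≠ i} |α_i - α_k|`. Keeping the factor `i = j` and bounding every other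
`|α_i - α_k| ≤ 2 max(1,|α_i|) max(1,|α_k|)` gives `|D| ≤ 2^((n-1)²) M^(2n-2) |f'(α)|`, since
`|aₙ| ≥ 1`. The upper bound is the triangle inequality for `f' = ∑ (k+1) a_{k+1} X^k`.
-/

open Finset Polynomial

theorem Finset.prod_filter_lt_sq_eq_prod_prod_erase {ι M : Type*} [Fintype ι] [LinearOrder ι]
    [CommMonoid M] (g : ι → ι → M) (hg : ∀ i k, g i k = g k i) :
    ∏ p ∈ univ.filter (fun p : ι × ι => p.1 < p.2), g p.1 p.2 ^ 2 =
      ∏ i, ∏ k ∈ univ.erase i, g i k := by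
  have hswap : ∏ p ∈ univ.filter (fun p : ι × ι => p.1 < p.2), g p.1 p.2 =
      ∏ p ∈ univ.filter (fun p : ι × ι => p.2 < p.1), g p.1 p.2 :=
    prod_nbij' Prod.swap Prod.swap (by simp) (by simp) (by simp) (by simp) fun p _ => hg _ _
  have hsplit : univ.filter (fun p : ι × ι => p.1 ≠ p.2) =
      univ.filter (fun p : ι × ι => p.1 < p.2) ∪ univ.filter (fun p : ι × ι => p.2 < p.1) := by
    ext p; simp only [mem_filter, mem_union, mem_univ, true_and, lt_or_lt_iff_ne]
  have hdisj : Disjoint (univ.filter (fun p : ι × ι => p.1 < p.2))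
      (univ.filter (fun p : ι × ι => p.2 < p.1)) :=
    disjoint_filter.2 fun p _ h => h.not_gt
  have hne : ∏ p ∈ univ.filter (fun p : ι × ι => p.1 ≠ p.2), g p.1 p.2 =
      ∏ i, ∏ k ∈ univ.erase i, g i k := by
    rw [prod_filter, ← univ_product_univ, prod_product]
    refine prod_congr rfl fun i _ => ?_
    rw [← filter_ne' univ i, prod_filter]
    simp only [ne_comm]
  rw [← hne, hsplit, prod_union hdisj, ← hswap, prod_pow, sq]

section RootSeparation

variable {ι E : Type*} [Fintype ι] [DecidableEq ι] [SeminormedAddCommGroup E]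

theorem norm_sub_le_two_mul_max_one_mul_max_one (x y : E) :
    ‖x - y‖ ≤ 2 * max 1 ‖x‖ * max 1 ‖y‖ := by
  nlinarith [norm_sub_le x y, le_max_left 1 ‖x‖, le_max_left 1 ‖y‖, le_max_right 1 ‖x‖,
    le_max_right 1 ‖y‖]

theorem prod_erase_norm_sub_le (r : ι → E) (i : ι) :
    ∏ k ∈ univ.erase i, ‖r i - r k‖ ≤
      2 ^ (Fintype.card ι - 1) * max 1 ‖r i‖ ^ (Fintype.card ι - 1) * ∏ k, max 1 ‖r k‖ := by
  have hcard : #(univ.erase i) = Fintype.card ι - 1 := by simp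
  calc ∏ k ∈ univ.erase i, ‖r i - r k‖
      ≤ ∏ k ∈ univ.erase i, 2 * max 1 ‖r i‖ * max 1 ‖r k‖ :=
        prod_le_prod (fun _ _ => norm_nonneg _)
          fun k _ => norm_sub_le_two_mul_max_one_mul_max_one _ _
    _ = 2 ^ (Fintype.card ι - 1) * max 1 ‖r i‖ ^ (Fintype.card ι - 1) *
          ∏ k ∈ univ.erase i, max 1 ‖r k‖ := by
        rw [prod_mul_distrib, prod_mul_distrib, prod_const, prod_const, hcard]
    _ ≤ _ := by
        gcongr
        exacts [fun _ _ _ => le_max_left _ _, subset_univ _]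

theorem prod_prod_erase_norm_sub_le (r : ι → E) (j : ι) :
    ∏ i, ∏ k ∈ univ.erase i, ‖r i - r k‖ ≤
      2 ^ ((Fintype.card ι - 1) ^ 2) * (∏ k, max 1 ‖r k‖) ^ (2 * Fintype.card ι - 2) *
        ∏ k ∈ univ.erase j, ‖r j - r k‖ := by
  set n := Fintype.card ι
  set m : ι → ℝ := fun k => max 1 ‖r k‖
  have hm : ∀ k, 1 ≤ m k := fun k => le_max_left _ _
  have hQ : ∏ k ∈ univ.erase j, m k ≤ ∏ k, m k :=
    prod_le_prod_of_subset_of_one_le (subset_univ _) (fun k _ => zero_le_one.trans (hm k))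
      fun k _ _ => hm k
  have hcard : #(univ.erase j) = n - 1 := by simp [n]
  have hothers : ∏ i ∈ univ.erase j, ∏ k ∈ univ.erase i, ‖r i - r k‖ ≤
      2 ^ ((n - 1) ^ 2) * (∏ k, m k) ^ (2 * n - 2) :=
    calc ∏ i ∈ univ.erase j, ∏ k ∈ univ.erase i, ‖r i - r k‖
        ≤ ∏ i ∈ univ.erase j, 2 ^ (n - 1) * m i ^ (n - 1) * ∏ k, m k :=
          prod_le_prod (fun _ _ => prod_nonneg fun _ _ => norm_nonneg _)
            fun i _ => prod_erase_norm_sub_le r i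
      _ = 2 ^ ((n - 1) ^ 2) * (∏ i ∈ univ.erase j, m i) ^ (n - 1) * (∏ k, m k) ^ (n - 1) := by
        rw [prod_mul_distrib, prod_mul_distrib, prod_const, prod_const, hcard, prod_pow,
          ← pow_mul, sq]
      _ ≤ 2 ^ ((n - 1) ^ 2) * (∏ k, m k) ^ (n - 1) * (∏ k, m k) ^ (n - 1) := by
        gcongr
      _ = 2 ^ ((n - 1) ^ 2) * (∏ k, m k) ^ (2 * n - 2) := by
        rw [mul_assoc, ← pow_add]; congr 2; omega
  rw [← mul_prod_erase univ _ (mem_univ j), mul_comm]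
  exact mul_le_mul_of_nonneg_right hothers (prod_nonneg fun _ _ => norm_nonneg _)

end RootSeparation

theorem norm_discr_le_pow_mul_norm_prod_erase {ι 𝕜 : Type*} [Fintype ι] [LinearOrder ι]
    [NormedField 𝕜] {a : 𝕜} (ha : 1 ≤ ‖a‖) (r : ι → 𝕜) (j : ι) :
    ‖a ^ (2 * Fintype.card ι - 2) *
        ∏ p ∈ univ.filter (fun p : ι × ι => p.1 < p.2), (r p.1 - r p.2) ^ 2‖ ≤
      2 ^ ((Fintype.card ι - 1) ^ 2) * (‖a‖ * ∏ k, max 1 ‖r k‖) ^ (2 * Fintype.card ι - 2) *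
        ‖a * ∏ k ∈ univ.erase j, (r j - r k)‖ := by
  have hprod : ‖∏ p ∈ univ.filter (fun p : ι × ι => p.1 < p.2), (r p.1 - r p.2) ^ 2‖ =
      ∏ i, ∏ k ∈ univ.erase i, ‖r i - r k‖ := by
    rw [norm_prod, ← prod_filter_lt_sq_eq_prod_prod_erase _ fun i k => norm_sub_rev (r i) (r k)]
    simp only [norm_pow]
  rw [norm_mul, norm_pow, hprod, norm_mul, norm_prod]
  calc ‖a‖ ^ (2 * Fintype.card ι - 2) * ∏ i, ∏ k ∈ univ.erase i, ‖r i - r k‖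
      ≤ ‖a‖ ^ (2 * Fintype.card ι - 2) * (2 ^ ((Fintype.card ι - 1) ^ 2) *
          (∏ k, max 1 ‖r k‖) ^ (2 * Fintype.card ι - 2) * ∏ k ∈ univ.erase j, ‖r j - r k‖) := by
        gcongr
        exact prod_prod_erase_norm_sub_le r j
    _ = 2 ^ ((Fintype.card ι - 1) ^ 2) * (‖a‖ * ∏ k, max 1 ‖r k‖) ^ (2 * Fintype.card ι - 2) *
          ∏ k ∈ univ.erase j, ‖r j - r k‖ := by ring
    _ ≤ _ := mul_le_mul_of_nonneg_left
          (le_mul_of_one_le_left (prod_nonneg fun _ _ => norm_nonneg _) ha) (by positivity)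

section CoefficientBounds

variable {𝕜 : Type*} [NormedField 𝕜]

theorem Polynomial.norm_eval_le_sum_norm_coeff_mul {p : 𝕜[X]} {n : ℕ} (hp : p.natDegree < n)
    (z : 𝕜) : ‖p.eval z‖ ≤ (∑ k ∈ range n, ‖p.coeff k‖) * max 1 ‖z‖ ^ (n - 1) := by
  rw [eval_eq_sum_range' hp, sum_mul]
  refine (norm_sum_le _ _).trans (sum_le_sum fun k hk => ?_)
  rw [norm_mul, norm_pow]
  gcongr
  calc ‖z‖ ^ k ≤ max 1 ‖z‖ ^ k := by gcongr; exact le_max_right _ _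
    _ ≤ max 1 ‖z‖ ^ (n - 1) :=
      pow_le_pow_right₀ (le_max_left _ _) (by rw [mem_range] at hk; omega)

theorem Polynomial.norm_eval_derivative_le {p : 𝕜[X]} {n : ℕ} {H : ℝ} (hp : p.natDegree ≤ n)
    (hH : ∀ i, ‖p.coeff i‖ ≤ H) (z : 𝕜) :
    ‖(derivative p).eval z‖ ≤ n * (n + 1) / 2 * H * max 1 ‖z‖ ^ (n - 1) := by
  rcases Nat.eq_zero_or_pos n with rfl | hn
  · simp [derivative_of_natDegree_zero (Nat.le_zero.mp hp)]
  have hgauss : ∀ m : ℕ, ∑ k ∈ range m, ((k : ℝ) + 1) = m * (m + 1) / 2 := by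
    intro m
    induction m with
    | zero => simp
    | succ m ih => rw [sum_range_succ, ih]; push_cast; ring
  have hdeg : (derivative p).natDegree < n := by
    have := natDegree_derivative_le p
    omega
  have hsum : ∑ k ∈ range n, ‖(derivative p).coeff k‖ ≤ n * (n + 1) / 2 * H :=
    calc ∑ k ∈ range n, ‖(derivative p).coeff k‖
        ≤ ∑ k ∈ range n, ((k : ℝ) + 1) * H := sum_le_sum fun k _ => by
          rw [coeff_derivative, norm_mul, mul_comm]
          gcongr
          · simpa using Nat.norm_cast_le (α := 𝕜) (k + 1)
          · exact hH _
      _ = n * (n + 1) / 2 * H := by rw [← sum_mul, hgauss n]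
  exact (norm_eval_le_sum_norm_coeff_mul hdeg z).trans (by gcongr)

end CoefficientBounds

theorem Polynomial.exists_eq_and_eval_derivative_eq {R ι : Type*} [CommRing R] [IsDomain R]
    [Fintype ι] [DecidableEq ι] {p : R[X]} {a : R} {r : ι → R} (ha : a ≠ 0)
    (hp : p = C a * ∏ i, (X - C (r i))) {x : R} (hx : p.IsRoot x) :
    ∃ j, x = r j ∧ (derivative p).eval x = a * ∏ k ∈ univ.erase j, (r j - r k) := by
  rw [hp, ← Lagrange.nodal_eq] at hx ⊢
  have hprod : ∏ i, (x - r i) = 0 := by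
    simpa [Lagrange.eval_nodal, ha] using hx
  obtain ⟨j, -, hj⟩ := prod_eq_zero_iff.1 hprod
  obtain rfl := sub_eq_zero.1 hj
  refine ⟨j, rfl, ?_⟩
  rw [derivative_C_mul, eval_mul, eval_C,
    Lagrange.eval_nodal_derivative_eval_node_eq (mem_univ j), Lagrange.eval_nodal]

theorem Polynomial.natAbs_coeff_le_sup (f : ℤ[X]) (i : ℕ) :
    (f.coeff i).natAbs ≤ (range (f.natDegree + 1)).sup fun k => (f.coeff k).natAbs := by
  by_cases hi : i ≤ f.natDegree
  · exact le_sup (f := fun k => (f.coeff k).natAbs) (mem_range.2 (by omega))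
  · simp [coeff_eq_zero_of_natDegree_lt (not_le.1 hi)]

theorem deriv_at_root_bounds_general (n : ℕ) (hn : 1 ≤ n) (f : Polynomial ℤ)
    (hdeg : f.natDegree = n)
    (r : Fin n → ℂ)
    (hroots : f.map (Int.castRingHom ℂ) = C ((f.leadingCoeff : ℂ)) * ∏ i, (X - C (r i)))
    (α : ℂ) (hα : Polynomial.aeval α f = 0)
    (D : ℂ)
    (hD : D = (f.leadingCoeff : ℂ) ^ (2 * n - 2) *
      ∏ p ∈ Finset.univ.filter (fun p : Fin n × Fin n => p.1 < p.2), (r p.1 - r p.2) ^ 2)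
    (M H : ℝ)
    (hM : M = |(f.leadingCoeff : ℝ)| * ∏ i, max 1 (‖r i‖))
    (hH : H = ((Finset.range (n + 1)).sup fun i => (f.coeff i).natAbs : ℕ)) :
    (2 : ℝ) ^ (-((n : ℝ) - 1) ^ 2) * ‖D‖ / M ^ (2 * n - 2) ≤
        ‖Polynomial.aeval α (Polynomial.derivative f)‖ ∧
      ‖Polynomial.aeval α (Polynomial.derivative f)‖ ≤
        (n * (n + 1) / 2 : ℝ) * H * max 1 (‖α‖) ^ (n - 1) := by
  have haeval (p : ℤ[X]) : aeval α p = (p.map (Int.castRingHom ℂ)).eval α := by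
    rw [aeval_def, eval_map, algebraMap_int_eq]
  rw [haeval, ← derivative_map]
  have hlc : f.leadingCoeff ≠ 0 := leadingCoeff_ne_zero.2 (ne_zero_of_natDegree_gt (hdeg ▸ hn))
  have hlc_norm : 1 ≤ ‖(f.leadingCoeff : ℂ)‖ := by
    rw [Complex.norm_intCast, ← Int.cast_abs]; exact_mod_cast Int.one_le_abs hlc
  constructor
  · obtain ⟨j, rfl, hj⟩ := exists_eq_and_eval_derivative_eq (Int.cast_ne_zero.2 hlc) hroots
      (by rw [IsRoot, ← haeval, hα])
    have hkey : ‖D‖ ≤ 2 ^ ((n - 1) ^ 2) * M ^ (2 * n - 2) *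
        ‖(derivative (f.map (Int.castRingHom ℂ))).eval (r j)‖ := by
      rw [hD, hM, hj, ← Complex.norm_intCast]
      simpa only [Fintype.card_fin] using norm_discr_le_pow_mul_norm_prod_erase hlc_norm r j
    have hM1 : 1 ≤ M := by
      rw [hM, ← Complex.norm_intCast]
      exact one_le_mul_of_one_le_of_one_le hlc_norm (one_le_prod fun _ _ => le_max_left _ _)
    have hexp : (2 : ℝ) ^ (-((n : ℝ) - 1) ^ 2) = ((2 : ℝ) ^ ((n - 1) ^ 2))⁻¹ := by
      rw [Real.rpow_neg zero_le_two, ← Real.rpow_natCast 2 ((n - 1) ^ 2)]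
      push_cast [Nat.cast_sub hn]
      rfl
    rw [hexp, div_le_iff₀ (by positivity), inv_mul_le_iff₀ (by positivity)]
    linarith
  · refine norm_eval_derivative_le (natDegree_map_le.trans hdeg.le) (fun i => ?_) α
    rw [coeff_map, eq_intCast, Complex.norm_intCast, ← Int.cast_abs, ← Nat.cast_natAbs, hH,
      ← hdeg]
    exact_mod_cast natAbs_coeff_le_sup f i

/-- Let `f = aₙ Xⁿ + ⋯ + a₀ ∈ ℤ[X]` be irreducible of degree `n`, with
discriminant `D = aₙ^(2n-2) ∏_{i<j} (α_i - α_j)^2`, Mahler measure `M = |aₙ| ∏ max(1,|α_i|)`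
and naive height `H = max |a_i|`.  If `α` is a root of `f` then
`2^(-(n-1)²) |D| / M^(2n-2) ≤ |f'(α)| ≤ (n(n+1)/2) H max(1,|α|)^(n-1)`. -/
theorem deriv_at_root_bounds (n : ℕ) (hn : 1 ≤ n) (f : Polynomial ℤ)
    (hdeg : f.natDegree = n) (hirr : Irreducible f)
    (r : Fin n → ℂ)
    (hroots : f.map (Int.castRingHom ℂ) = C ((f.leadingCoeff : ℂ)) * ∏ i, (X - C (r i)))
    (α : ℂ) (hα : Polynomial.aeval α f = 0)
    (D : ℂ)
    (hD : D = (f.leadingCoeff : ℂ) ^ (2 * n - 2) *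
      ∏ p ∈ Finset.univ.filter (fun p : Fin n × Fin n => p.1 < p.2), (r p.1 - r p.2) ^ 2)
    (M H : ℝ)
    (hM : M = |(f.leadingCoeff : ℝ)| * ∏ i, max 1 (‖r i‖))
    (hH : H = ((Finset.range (n + 1)).sup fun i => (f.coeff i).natAbs : ℕ)) :
    (2 : ℝ) ^ (-((n : ℝ) - 1) ^ 2) * ‖D‖ / M ^ (2 * n - 2) ≤
        ‖Polynomial.aeval α (Polynomial.derivative f)‖ ∧
      ‖Polynomial.aeval α (Polynomial.derivative f)‖ ≤
        (n * (n + 1) / 2 : ℝ) * H * max 1 (‖α‖) ^ (n - 1) :=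
  deriv_at_root_bounds_general n hn f hdeg r hroots α hα D hD M H hM hH
end

section
/- Let F(x,y) = a_0 ∏_{j=1}^n (x - α_j y) be a binary form with integer coefficients, degree n ≥ 3, and nonzero discriminant D. For every pair of integers (x, y) with y ≠ 0, there exists a root α of F(z,1) such that |α - x/y| ≤ 2^{n-1} · n^{n-1/2} · M(F)^{n-2} · |F(x,y)| / (|D|^{1/2} · |y|^n). -/
/-!
Let `α_i` be the root nearest to `β = x/y`, so that `|α_j - α_i| ≤ 2 |α_j - β|` for all `j`.
Up to sign, `D^{1/2} = a_0^{n-1} det V(α)` for the Vandermonde matrix `V(α)`, and the product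
formula for `det V(α)` splits into `∏_{j ≠ i} (α_j - α_i)`, at most
`2^{n-1} ∏_{j ≠ i} |α_j - β| = 2^{n-1} |F(x,y)| / (|a_0| |y|^n |α_i - β|)` in absolute value, times
the Vandermonde determinant of the remaining `n - 1` roots. The Leibniz formula bounds the latter
by `(n-1)! ∏_j max(1, |α_j|)^{n-2}`, and `(n-1)! ≤ n^{n-1/2}`.
-/

open Finset Polynomial
open scoped Nat

namespace Matrix

theorem det_vandermonde_cons {R : Type*} [CommRing R] {m : ℕ} (a : R) (u : Fin m → R) :
    det (vandermonde (Fin.cons a u : Fin (m + 1) → R)) =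
      (∏ j, (u j - a)) * det (vandermonde u) := by
  simp only [det_vandermonde, Fin.prod_univ_succ, Fin.prod_Ioi_zero, Fin.prod_Ioi_succ,
    Fin.cons_zero, Fin.cons_succ]

theorem det_vandermonde_comp_perm {R : Type*} [CommRing R] {n : ℕ} (v : Fin n → R)
    (σ : Equiv.Perm (Fin n)) :
    det (vandermonde (v ∘ σ)) = Equiv.Perm.sign σ * det (vandermonde v) :=
  det_permute σ (vandermonde v)

theorem prod_filter_lt_sub_sq_eq_det_vandermonde_sq {R : Type*} [CommRing R] {n : ℕ}
    (v : Fin n → R) :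
    ∏ p ∈ univ.filter (fun p : Fin n × Fin n => p.1 < p.2), (v p.1 - v p.2) ^ 2 =
      det (vandermonde v) ^ 2 := by
  rw [det_vandermonde, ← prod_pow, ← univ_product_univ, prod_filter, prod_product]
  refine prod_congr rfl fun i _ => ?_
  rw [← prod_pow, ← prod_filter, filter_lt_eq_Ioi]
  exact prod_congr rfl fun j _ => by ring

variable {𝕜 : Type*} [NormedField 𝕜]

theorem norm_det_vandermonde_eq_prod_mul_norm_det_vandermonde_succAbove {m : ℕ}
    (v : Fin (m + 1) → 𝕜) (i : Fin (m + 1)) :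
    ‖det (vandermonde v)‖ =
      (∏ k, ‖v (i.succAbove k) - v i‖) * ‖det (vandermonde (v ∘ i.succAbove))‖ := by
  have hcons : v ∘ i.cycleRange.symm = Fin.cons (v i) (v ∘ i.succAbove) := by
    ext j
    cases j using Fin.cases <;> simp [Fin.cycleRange_symm_zero, Fin.cycleRange_symm_succ]
  have hperm := congrArg norm (det_vandermonde_comp_perm v i.cycleRange.symm)
  rw [hcons, det_vandermonde_cons, norm_mul, norm_mul, norm_prod] at hperm
  rcases Int.units_eq_one_or (Equiv.Perm.sign i.cycleRange.symm) with h | h <;>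
    simpa [h] using hperm.symm

theorem norm_det_vandermonde_le {m : ℕ} (v : Fin m → 𝕜) :
    ‖det (vandermonde v)‖ ≤ m ! * (∏ k, max 1 ‖v k‖) ^ (m - 1) := by
  have hterm (σ : Equiv.Perm (Fin m)) :
      ∏ i, ‖vandermonde v (σ i) i‖ ≤ (∏ k, max 1 ‖v k‖) ^ (m - 1) :=
    calc ∏ i, ‖vandermonde v (σ i) i‖ ≤ ∏ i, max 1 ‖v (σ i)‖ ^ (m - 1) := by
          gcongr with i
          rw [vandermonde_apply, norm_pow]
          exact (pow_le_pow_left₀ (norm_nonneg _) (le_max_right _ _) _).trans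
            (pow_le_pow_right₀ (le_max_left _ _) (by omega))
      _ = (∏ k, max 1 ‖v k‖) ^ (m - 1) := by
          rw [← prod_pow]; exact Equiv.prod_comp σ fun k => max 1 ‖v k‖ ^ (m - 1)
  calc ‖det (vandermonde v)‖ ≤ ∑ σ : Equiv.Perm (Fin m), ∏ i, ‖vandermonde v (σ i) i‖ := by
        rw [det_apply]
        refine (norm_sum_le _ _).trans_eq (sum_congr rfl fun σ _ => ?_)
        rw [norm_units_zsmul, norm_prod]
    _ ≤ m ! * (∏ k, max 1 ‖v k‖) ^ (m - 1) := by
        grw [sum_le_sum fun σ _ => hterm σ]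
        simp [Fintype.card_perm]

theorem exists_norm_sub_mul_norm_det_vandermonde_le {m : ℕ} (α : Fin (m + 1) → 𝕜) (β : 𝕜) :
    ∃ i, ‖α i - β‖ * ‖det (vandermonde α)‖ ≤
      2 ^ m * m ! * (∏ j, max 1 ‖α j‖) ^ (m - 1) * ∏ j, ‖α j - β‖ := by
  obtain ⟨i, -, hmin⟩ := exists_min_image univ (fun j => ‖α j - β‖) univ_nonempty
  refine ⟨i, ?_⟩
  have hnear : ∏ k, ‖α (i.succAbove k) - α i‖ ≤ 2 ^ m * ∏ k, ‖α (i.succAbove k) - β‖ :=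
    calc ∏ k, ‖α (i.succAbove k) - α i‖ ≤ ∏ k, 2 * ‖α (i.succAbove k) - β‖ := by
          gcongr with k
          calc ‖α (i.succAbove k) - α i‖ ≤ ‖α (i.succAbove k) - β‖ + ‖α i - β‖ :=
                norm_sub_le_norm_sub_add_norm_sub _ _ _ |>.trans_eq (by rw [norm_sub_rev β])
            _ ≤ 2 * ‖α (i.succAbove k) - β‖ := by linarith [hmin _ (mem_univ (i.succAbove k))]
      _ = 2 ^ m * ∏ k, ‖α (i.succAbove k) - β‖ := by simp [prod_mul_distrib]
  have hfar : ‖det (vandermonde (α ∘ i.succAbove))‖ ≤ m ! * (∏ j, max 1 ‖α j‖) ^ (m - 1) := by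
    grw [norm_det_vandermonde_le]
    gcongr
    rw [Fin.prod_univ_succAbove _ i]
    exact le_mul_of_one_le_left (by positivity) (le_max_left _ _)
  rw [norm_det_vandermonde_eq_prod_mul_norm_det_vandermonde_succAbove α i,
    Fin.prod_univ_succAbove (fun j => ‖α j - β‖) i]
  grw [hnear, hfar]
  exact le_of_eq (by ring)

end Matrix

theorem norm_prod_sub_mul_eq {𝕜 ι : Type*} [NormedField 𝕜] [Fintype ι] (α : ι → 𝕜) (x : 𝕜)
    {y : 𝕜} (hy : y ≠ 0) :
    ‖∏ j, (x - α j * y)‖ = ‖y‖ ^ Fintype.card ι * ∏ j, ‖α j - x / y‖ := by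
  have hfactor (j : ι) : x - α j * y = y * (x / y - α j) := by field_simp
  simp only [hfactor, prod_mul_distrib, prod_const, card_univ, norm_mul, norm_pow, norm_prod,
    norm_sub_rev (x / y)]

theorem factorial_le_succ_rpow (m : ℕ) :
    (m ! : ℝ) ≤ ((m + 1 : ℕ) : ℝ) ^ (((m + 1 : ℕ) : ℝ) - 1 / 2) :=
  calc (m ! : ℝ) ≤ ((m + 1 : ℕ) : ℝ) ^ m := by
        exact_mod_cast (Nat.factorial_le_pow m).trans (Nat.pow_le_pow_left m.le_succ m)
    _ = ((m + 1 : ℕ) : ℝ) ^ (m : ℝ) := (Real.rpow_natCast _ _).symm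
    _ ≤ _ := Real.rpow_le_rpow_of_exponent_le (by simp) (by push_cast; linarith)

theorem lewis_mahler_general (n : ℕ) (hn : 3 ≤ n) (a0 : ℤ) (α : Fin n → ℂ)
    (D : ℂ)
    (hD : D = (a0 : ℂ) ^ (2 * n - 2) *
      ∏ p ∈ Finset.univ.filter (fun p : Fin n × Fin n => p.1 < p.2), (α p.1 - α p.2) ^ 2)
    (hD0 : D ≠ 0)
    (M : ℝ) (hM : M = |(a0 : ℝ)| * ∏ i, max 1 (‖α i‖))
    (x y : ℤ) (hy : y ≠ 0) :
    ∃ i : Fin n, ‖α i - (x : ℂ) / (y : ℂ)‖ ≤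
      2 ^ (n - 1) * (n : ℝ) ^ ((n : ℝ) - 1 / 2) * M ^ (n - 2) *
        ‖(a0 : ℂ) * ∏ j, ((x : ℂ) - α j * (y : ℂ))‖ /
      (Real.sqrt (‖D‖) * |(y : ℝ)| ^ n) := by
  obtain ⟨k, rfl⟩ : ∃ k, n = k + 2 := ⟨n - 2, by omega⟩
  have hsqrtD : Real.sqrt ‖D‖ = |(a0 : ℝ)| ^ (k + 1) * ‖(Matrix.vandermonde α).det‖ := by
    rw [hD, Matrix.prod_filter_lt_sub_sq_eq_det_vandermonde_sq,
      show 2 * (k + 2) - 2 = (k + 1) * 2 by omega, pow_mul, ← mul_pow, norm_pow,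
      Real.sqrt_sq (norm_nonneg _), norm_mul, norm_pow, Complex.norm_intCast]
  have hpos : 0 < Real.sqrt ‖D‖ * |(y : ℝ)| ^ (k + 2) := by
    have : (y : ℝ) ≠ 0 := Int.cast_ne_zero.mpr hy
    positivity
  obtain ⟨i, hi⟩ := Matrix.exists_norm_sub_mul_norm_det_vandermonde_le α (x / y)
  refine ⟨i, ?_⟩
  rw [le_div_iff₀ hpos, hsqrtD, norm_mul, norm_prod_sub_mul_eq α _ (Int.cast_ne_zero.mpr hy),
    Fintype.card_fin, hM]
  simp only [Complex.norm_intCast, Nat.add_sub_cancel, Nat.add_succ_sub_one] at hi ⊢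
  calc ‖α i - x / y‖ * (|(a0 : ℝ)| ^ (k + 1) * ‖(Matrix.vandermonde α).det‖ * |(y : ℝ)| ^ (k + 2))
      = |(a0 : ℝ)| ^ (k + 1) * |(y : ℝ)| ^ (k + 2) *
          (‖α i - x / y‖ * ‖(Matrix.vandermonde α).det‖) := by ring
    _ ≤ |(a0 : ℝ)| ^ (k + 1) * |(y : ℝ)| ^ (k + 2) *
          (2 ^ (k + 1) * ((k + 2 : ℕ) : ℝ) ^ (((k + 2 : ℕ) : ℝ) - 1 / 2) *
            (∏ j, max 1 ‖α j‖) ^ k * ∏ j, ‖α j - x / y‖) := by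
        grw [hi, factorial_le_succ_rpow]
    _ = _ := by ring

/-- (Lewis–Mahler inequality.)  Let
`F(x,y) = a₀ ∏ (x - α_j y)` be a binary form with integer coefficients, degree `n ≥ 3` and
nonzero discriminant `D = a₀^(2n-2) ∏_{i<j}(α_i - α_j)^2`.  For every pair of integers
`(x,y)` with `y ≠ 0` there is a root `α` of `F(z,1)` with
`|α - x/y| ≤ 2^(n-1) n^(n-1/2) M(F)^(n-2) |F(x,y)| / (|D|^(1/2) |y|^n)`,
where `M(F) = |a₀| ∏ max(1,|α_j|)` is the Mahler measure of `F`. -/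
theorem lewis_mahler (n : ℕ) (hn : 3 ≤ n) (a0 : ℤ) (ha0 : a0 ≠ 0) (α : Fin n → ℂ)
    (f : Polynomial ℤ) (hdeg : f.natDegree = n)
    (hf : f.map (Int.castRingHom ℂ) = C (a0 : ℂ) * ∏ i, (X - C (α i)))
    (D : ℂ)
    (hD : D = (a0 : ℂ) ^ (2 * n - 2) *
      ∏ p ∈ Finset.univ.filter (fun p : Fin n × Fin n => p.1 < p.2), (α p.1 - α p.2) ^ 2)
    (hD0 : D ≠ 0)
    (M : ℝ) (hM : M = |(a0 : ℝ)| * ∏ i, max 1 (‖α i‖))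
    (x y : ℤ) (hy : y ≠ 0) :
    ∃ i : Fin n, ‖α i - (x : ℂ) / (y : ℂ)‖ ≤
      2 ^ (n - 1) * (n : ℝ) ^ ((n : ℝ) - 1 / 2) * M ^ (n - 2) *
        ‖(a0 : ℂ) * ∏ j, ((x : ℂ) - α j * (y : ℂ))‖ /
      (Real.sqrt (‖D‖) * |(y : ℝ)| ^ n) :=
  lewis_mahler_general n hn a0 α D hD hD0 M hM x y hy
end

section
/- Let F(x,y) be an irreducible binary form of degree n ≥ 3 with integer coefficients, and let α be a non-real root of F(X,1) = 0. Let m be a positive integer and suppose (x,y) ∈ ℤ² satisfies |F(x,y)| ≤ m and |x - αy| = min_{1≤j≤n} |x - α_j y| over all roots α_j of F(X,1). Then |y| ≤ (n+1) · m^{1/n} · 2^{(n-1)^2/n} · M(F)^{3 - 3/n} / (√3 · |D|)^{1/n}. -/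
/-!
Write `L j = ‖x - α j * y‖`. Relatedness gives `‖α k - α j‖ * |y| ≤ L k + L j ≤ 2 * L j` for all
`j`, and `|Im (α k)| * |y| ≤ L k`; multiplying these and using `|a0| * ∏ j, L j ≤ m` bounds
`|a0| * |Im (α k)| * |y| ^ n * ∏_{j ≠ k} ‖α k - α j‖` by `2 ^ (n - 1) * m`.
Up to `|a0| ^ (2n - 2)`, `‖D‖` is the square of `∏_{j ≠ k} ‖α k - α j‖` times the discriminant
product of the other roots, which is bounded trivially through `max 1 ‖α i‖`. One factor
`∏_{j ≠ k} ‖α k - α j‖` is at most `2 ^ (n - 1) * |Im (α k)| * (M / |a0|) ^ (n - 1)`, because the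
conjugate root lies at distance `2 * |Im (α k)|` from `α k`; this cancels the `|Im (α k)|` above.
Altogether `|y| ^ n * ‖D‖ ≤ 2 ^ (n * (n - 1)) * m * M ^ (3n - 3)`, and `√3 ≤ 2 ≤ n + 1` absorbs
the remaining constants.
-/

open Finset Polynomial ComplexConjugate

namespace Finset

variable {ι M : Type*} [CommMonoid M]

theorem prod_offDiag_eq_sq_prod_filter_lt [LinearOrder ι] (s : Finset ι) (g : ι → ι → M)
    (hg : ∀ i j, g i j = g j i) :
    ∏ p ∈ s.offDiag, g p.1 p.2 = (∏ p ∈ s ×ˢ s with p.1 < p.2, g p.1 p.2) ^ 2 := by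
  have hsplit : s.offDiag = {p ∈ s ×ˢ s | p.1 < p.2} ∪ {p ∈ s ×ˢ s | p.2 < p.1} := by
    ext p
    simp only [mem_offDiag, mem_union, mem_filter, mem_product, ne_iff_lt_or_gt]
    tauto
  have hswap : ∏ p ∈ s ×ˢ s with p.2 < p.1, g p.1 p.2 = ∏ p ∈ s ×ˢ s with p.1 < p.2, g p.1 p.2 :=
    prod_nbij' Prod.swap Prod.swap (by simp +contextual) (by simp +contextual) (by simp) (by simp)
      fun p _ => hg _ _
  rw [hsplit, prod_union (disjoint_filter.2 fun p _ h => h.asymm), hswap, sq]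

variable [DecidableEq ι]

theorem prod_offDiag_insert {s : Finset ι} {a : ι} (ha : a ∉ s) (g : ι → ι → M) :
    ∏ p ∈ (insert a s).offDiag, g p.1 p.2 =
      (∏ p ∈ s.offDiag, g p.1 p.2) * (∏ j ∈ s, g a j) * ∏ j ∈ s, g j a := by
  rw [offDiag_insert ha, prod_union, prod_union, singleton_product, product_singleton, prod_map,
    prod_map]
  · rfl
  all_goals exact disjoint_left.2 fun p hp hp' => by simp at hp hp'; grind

theorem prod_offDiag_fst (s : Finset ι) (f : ι → M) :
    ∏ p ∈ s.offDiag, f p.1 = ∏ i ∈ s, f i ^ (#s - 1) := by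
  rw [prod_finset_product s.offDiag s (fun i => s.erase i) (by simp [and_comm, ne_comm])]
  simp +contextual [card_erase_of_mem]

theorem prod_offDiag_snd (s : Finset ι) (f : ι → M) :
    ∏ p ∈ s.offDiag, f p.2 = ∏ i ∈ s, f i ^ (#s - 1) := by
  rw [prod_finset_product_right s.offDiag s (fun i => s.erase i) (by simp; tauto)]
  simp +contextual [card_erase_of_mem]

end Finset

section MaxOneNorm

variable {E ι : Type*} [SeminormedAddCommGroup E]

theorem norm_sub_le_two_mul_max_one (z w : E) :
    ‖z - w‖ ≤ 2 * (max 1 ‖z‖ * max 1 ‖w‖) := by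
  have hz : 1 ≤ max 1 ‖z‖ := le_max_left _ _
  have hw : 1 ≤ max 1 ‖w‖ := le_max_left _ _
  calc ‖z - w‖ ≤ max 1 ‖z‖ + max 1 ‖w‖ :=
        (norm_sub_le z w).trans (add_le_add (le_max_right _ _) (le_max_right _ _))
    _ ≤ 2 * (max 1 ‖z‖ * max 1 ‖w‖) := by nlinarith

theorem prod_norm_sub_le (z : E) (β : ι → E) (s : Finset ι) :
    ∏ j ∈ s, ‖z - β j‖ ≤ 2 ^ #s * max 1 ‖z‖ ^ #s * ∏ j ∈ s, max 1 ‖β j‖ := by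
  calc ∏ j ∈ s, ‖z - β j‖ ≤ ∏ j ∈ s, 2 * (max 1 ‖z‖ * max 1 ‖β j‖) :=
        prod_le_prod (fun _ _ => norm_nonneg _) fun j _ => norm_sub_le_two_mul_max_one _ _
    _ = _ := by simp only [prod_mul_distrib, prod_const, mul_assoc]

theorem prod_offDiag_norm_sub_le [DecidableEq ι] (β : ι → E) (s : Finset ι) :
    ∏ p ∈ s.offDiag, ‖β p.1 - β p.2‖ ≤
      2 ^ (#s * (#s - 1)) * (∏ i ∈ s, max 1 ‖β i‖) ^ (2 * (#s - 1)) := by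
  calc ∏ p ∈ s.offDiag, ‖β p.1 - β p.2‖
      ≤ ∏ p ∈ s.offDiag, 2 * (max 1 ‖β p.1‖ * max 1 ‖β p.2‖) :=
        prod_le_prod (fun _ _ => norm_nonneg _) fun p _ => norm_sub_le_two_mul_max_one _ _
    _ = _ := by
      rw [prod_mul_distrib, prod_mul_distrib, prod_const, offDiag_card,
        prod_offDiag_fst s fun i => max 1 ‖β i‖, prod_offDiag_snd s fun i => max 1 ‖β i‖,
        prod_pow, ← pow_add, Nat.mul_sub_one, two_mul]

end MaxOneNorm

theorem norm_prod_filter_lt_sq_sub_le {ι : Type*} [Fintype ι] [LinearOrder ι] (α : ι → ℂ) (k : ι) :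
    ‖∏ p ∈ univ.filter (fun p : ι × ι => p.1 < p.2), (α p.1 - α p.2) ^ 2‖ ≤
      (∏ j ∈ univ.erase k, ‖α k - α j‖) ^ 2 * 2 ^ ((Fintype.card ι - 1) * (Fintype.card ι - 2)) *
        (∏ i, max 1 ‖α i‖) ^ (2 * (Fintype.card ι - 2)) := by
  have hcard : #(univ.erase k) = Fintype.card ι - 1 := by
    rw [card_erase_of_mem (mem_univ k), card_univ]
  have hsub : ∏ i ∈ univ.erase k, max 1 ‖α i‖ ≤ ∏ i, max 1 ‖α i‖ :=
    prod_le_prod_of_subset_of_one_le (subset_univ _)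
      (fun _ _ => zero_le_one.trans (le_max_left _ _)) fun _ _ _ => le_max_left _ _
  have hoff := prod_offDiag_norm_sub_le α (univ.erase k)
  rw [hcard, Nat.sub_sub] at hoff
  have hins := prod_offDiag_insert (notMem_erase k univ) fun i j => ‖α i - α j‖
  rw [insert_erase (mem_univ k)] at hins
  simp only [norm_sub_rev (α _) (α k)] at hins
  rw [norm_prod]
  simp only [norm_pow]
  rw [prod_pow, ← univ_product_univ,
    ← prod_offDiag_eq_sq_prod_filter_lt _ (fun i j => ‖α i - α j‖) fun i j => norm_sub_rev _ _,
    hins, mul_assoc, ← sq, mul_comm, mul_assoc]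
  gcongr
  exact hoff.trans (by gcongr)

namespace Complex

theorem abs_im_mul_abs_le_norm_sub_mul (α : ℂ) (x y : ℝ) : |α.im| * |y| ≤ ‖x - α * y‖ := by
  calc |α.im| * |y| = |(x - α * y).im| := by simp [abs_mul]
    _ ≤ ‖x - α * y‖ := abs_im_le_norm _

theorem norm_sub_mul_norm_le_two_mul {β γ x y : ℂ} (h : ‖x - β * y‖ ≤ ‖x - γ * y‖) :
    ‖β - γ‖ * ‖y‖ ≤ 2 * ‖x - γ * y‖ := by
  calc ‖β - γ‖ * ‖y‖ = ‖(x - γ * y) - (x - β * y)‖ := by rw [← norm_mul]; ring_nf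
    _ ≤ ‖x - γ * y‖ + ‖x - β * y‖ := norm_sub_le _ _
    _ ≤ 2 * ‖x - γ * y‖ := by linarith

theorem norm_sub_conj (z : ℂ) : ‖z - conj z‖ = 2 * |z.im| := by
  rw [sub_conj, norm_mul, norm_I, mul_one, norm_real, Real.norm_eq_abs, abs_mul, abs_two]

end Complex

section RootDistances

variable {ι : Type*} [Fintype ι] [DecidableEq ι]

theorem abs_im_mul_pow_mul_prod_le_of_related (α : ι → ℂ) (k : ι) (x y : ℝ)
    (hrel : ∀ j, ‖x - α k * y‖ ≤ ‖x - α j * y‖) :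
    |(α k).im| * |y| ^ Fintype.card ι * ∏ j ∈ univ.erase k, ‖α k - α j‖ ≤
      2 ^ (Fintype.card ι - 1) * ∏ j, ‖x - α j * y‖ := by
  have hcard : #(univ.erase k) = Fintype.card ι - 1 := by
    rw [card_erase_of_mem (mem_univ k), card_univ]
  have hk : |(α k).im| * |y| ≤ ‖x - α k * y‖ := Complex.abs_im_mul_abs_le_norm_sub_mul _ _ _
  have hothers : ∏ j ∈ univ.erase k, ‖α k - α j‖ * |y| ≤
      ∏ j ∈ univ.erase k, 2 * ‖x - α j * y‖ :=
    prod_le_prod (fun _ _ => by positivity) fun j _ => by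
      simpa using Complex.norm_sub_mul_norm_le_two_mul (hrel j)
  rw [prod_mul_distrib, prod_mul_distrib, prod_const, prod_const, hcard] at hothers
  calc |(α k).im| * |y| ^ Fintype.card ι * ∏ j ∈ univ.erase k, ‖α k - α j‖
      = (|(α k).im| * |y|) *
          ((∏ j ∈ univ.erase k, ‖α k - α j‖) * |y| ^ (Fintype.card ι - 1)) := by
        rw [← Nat.sub_add_cancel (Fintype.card_pos_iff.2 ⟨k⟩), pow_succ, Nat.add_sub_cancel]
        ring
    _ ≤ ‖x - α k * y‖ * (2 ^ (Fintype.card ι - 1) * ∏ j ∈ univ.erase k, ‖x - α j * y‖) :=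
        mul_le_mul hk hothers (by positivity) (norm_nonneg _)
    _ = 2 ^ (Fintype.card ι - 1) * ∏ j, ‖x - α j * y‖ := by
        rw [← mul_prod_erase univ _ (mem_univ k)]; ring

theorem prod_norm_sub_erase_le_of_conj (α : ι → ℂ) {j k : ι} (hjk : j ≠ k)
    (hj : α j = conj (α k)) :
    ∏ i ∈ univ.erase k, ‖α k - α i‖ ≤
      2 ^ (Fintype.card ι - 1) * |(α k).im| * (∏ i, max 1 ‖α i‖) ^ (Fintype.card ι - 1) := by
  set P := ∏ i, max 1 ‖α i‖
  have hmem : j ∈ univ.erase k := mem_erase.2 ⟨hjk, mem_univ j⟩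
  have hcard : #((univ.erase k).erase j) + 1 = Fintype.card ι - 1 := by
    rw [card_erase_add_one hmem, card_erase_of_mem (mem_univ k), card_univ]
  have hle : ∀ s : Finset ι, ∏ i ∈ s, max 1 ‖α i‖ ≤ P := fun s =>
    prod_le_prod_of_subset_of_one_le (subset_univ _)
      (fun _ _ => zero_le_one.trans (le_max_left _ _)) fun _ _ _ => le_max_left _ _
  have hrest := prod_norm_sub_le (α k) α ((univ.erase k).erase j)
  calc ∏ i ∈ univ.erase k, ‖α k - α i‖
      = 2 * |(α k).im| * ∏ i ∈ (univ.erase k).erase j, ‖α k - α i‖ := by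
        rw [← mul_prod_erase _ _ hmem, hj, Complex.norm_sub_conj]
    _ ≤ 2 * |(α k).im| * (2 ^ #((univ.erase k).erase j) * P ^ #((univ.erase k).erase j) * P) := by
        gcongr
        refine hrest.trans ?_
        gcongr
        · simpa using hle {k}
        · exact hle _
    _ = _ := by rw [← hcard]; ring

end RootDistances

namespace Polynomial

variable {ι : Type*} [Fintype ι]

theorem injective_of_map_eq_C_mul_prod {f : ℤ[X]} (hirr : Irreducible f)
    (hdeg : f.natDegree ≠ 0) {a : ℂ} {α : ι → ℂ}
    (hf : f.map (Int.castRingHom ℂ) = C a * ∏ i, (X - C (α i))) : Function.Injective α := by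
  have hsep : (f.map (Int.castRingHom ℚ)).Separable :=
    ((IsPrimitive.Int.irreducible_iff_irreducible_map_cast (hirr.isPrimitive hdeg)).1
      hirr).separable
  have hsepℂ := hsep.map (f := algebraMap ℚ ℂ)
  rw [map_map, RingHom.ext_int ((algebraMap ℚ ℂ).comp (Int.castRingHom ℚ)) (Int.castRingHom ℂ),
    hf] at hsepℂ
  exact separable_prod_X_sub_C_iff.1 hsepℂ.of_mul_right

theorem exists_eq_conj_of_map_eq_C_mul_prod {f : ℤ[X]} {a : ℂ} (ha : a ≠ 0)
    {α : ι → ℂ} (hf : f.map (Int.castRingHom ℂ) = C a * ∏ i, (X - C (α i))) (k : ι) :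
    ∃ j, α j = conj (α k) := by
  have hconj : ∀ z, (f.map (Int.castRingHom ℂ)).eval (conj z) =
      conj ((f.map (Int.castRingHom ℂ)).eval z) := fun z => by
    rw [eval_map, eval_map, hom_eval₂,
      RingHom.ext_int ((starRingEnd ℂ).comp (Int.castRingHom ℂ)) (Int.castRingHom ℂ)]
  have hroot : (f.map (Int.castRingHom ℂ)).eval (conj (α k)) = 0 := by
    rw [hconj, hf, eval_mul, eval_prod, prod_eq_zero (mem_univ k) (by simp), mul_zero, map_zero]
  rw [hf, eval_mul, eval_C, eval_prod, mul_eq_zero, prod_eq_zero_iff] at hroot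
  obtain ⟨j, -, hj⟩ := hroot.resolve_left ha
  exact ⟨j, (sub_eq_zero.1 (by simpa using hj)).symm⟩

end Polynomial

theorem prod_filter_lt_sq_sub_ne_zero {ι : Type*} [Fintype ι] [LinearOrder ι] {α : ι → ℂ}
    (hα : Function.Injective α) :
    ∏ p ∈ univ.filter (fun p : ι × ι => p.1 < p.2), (α p.1 - α p.2) ^ 2 ≠ 0 :=
  prod_ne_zero_iff.2 fun _ hp => pow_ne_zero _ (sub_ne_zero.2 (hα.ne (mem_filter.1 hp).2.ne))

theorem pow_mul_le_of_disc_bounds {n : ℕ} (hn : 2 ≤ n) {a t Y Δ δ m P : ℝ} (ha : 1 ≤ a)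
    (ht : 0 < t) (hY : 0 ≤ Y) (hΔ : 0 ≤ Δ) (hP : 1 ≤ P)
    (hdisc : δ ≤ a ^ (2 * n - 2) * (Δ ^ 2 * 2 ^ ((n - 1) * (n - 2)) * P ^ (2 * (n - 2))))
    (hdio : a * (t * Y ^ n * Δ) ≤ 2 ^ (n - 1) * m)
    (hroot : Δ ≤ 2 ^ (n - 1) * t * P ^ (n - 1)) :
    Y ^ n * δ ≤ 2 ^ (n * (n - 1)) * m * (a * P) ^ (3 * n - 3) := by
  obtain ⟨d, rfl⟩ : ∃ d, n = d + 2 := ⟨n - 2, by omega⟩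
  simp only [show 2 * (d + 2) - 2 = 2 * d + 2 by omega, show d + 2 - 1 = d + 1 by omega,
    Nat.add_sub_cancel, show 3 * (d + 2) - 3 = 3 * d + 3 by omega] at *
  have hm : 0 ≤ m :=
    (mul_nonneg_iff_of_pos_left (by positivity)).1 ((by positivity : (0 : ℝ) ≤ _).trans hdio)
  have hat : 0 < a * t := by positivity
  have hcancel : a * t * (Y ^ (d + 2) * δ) ≤
      a * t * (2 ^ ((d + 2) * (d + 1)) * m * (a ^ (2 * d + 1) * P ^ (3 * d + 1))) :=
    calc a * t * (Y ^ (d + 2) * δ)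
        ≤ a * t * (Y ^ (d + 2) * (a ^ (2 * d + 2) * (Δ ^ 2 * 2 ^ ((d + 1) * d) * P ^ (2 * d)))) :=
          by gcongr
      _ = (a ^ (2 * d + 2) * 2 ^ ((d + 1) * d) * P ^ (2 * d) * Δ) *
            (a * (t * Y ^ (d + 2) * Δ)) := by ring
      _ ≤ (a ^ (2 * d + 2) * 2 ^ ((d + 1) * d) * P ^ (2 * d) * (2 ^ (d + 1) * t * P ^ (d + 1))) *
            (2 ^ (d + 1) * m) := by
          gcongr
      _ = _ := by ring
  calc Y ^ (d + 2) * δ ≤ 2 ^ ((d + 2) * (d + 1)) * m * (a ^ (2 * d + 1) * P ^ (3 * d + 1)) :=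
        le_of_mul_le_mul_left hcancel hat
    _ ≤ 2 ^ ((d + 2) * (d + 1)) * m * (a ^ (3 * d + 3) * P ^ (3 * d + 3)) := by
        gcongr <;> omega
    _ = _ := by rw [mul_pow]

theorem le_rpow_bound_of_pow_mul_le {n : ℕ} (hn : n ≠ 0) {Y δ m M : ℝ} (hY : 0 ≤ Y) (hδ : 0 < δ)
    (hm : 0 ≤ m) (hM : 0 ≤ M) (h : Y ^ n * δ ≤ 2 ^ (n * (n - 1)) * m * M ^ (3 * n - 3)) :
    Y ≤ ((n : ℝ) + 1) * m ^ ((1 : ℝ) / n) * (2 : ℝ) ^ (((n : ℝ) - 1) ^ 2 / n) *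
      M ^ ((3 : ℝ) - 3 / n) / (Real.sqrt 3 * δ) ^ ((1 : ℝ) / n) := by
  have hn' : (n : ℝ) ≠ 0 := Nat.cast_ne_zero.2 hn
  have hroot : ∀ {x : ℝ} (r : ℝ), 0 ≤ x → (x ^ (r / n)) ^ n = x ^ r := fun r hx => by
    rw [← Real.rpow_mul_natCast hx, div_mul_cancel₀ _ hn']
  have hexp2 : ((n : ℝ) - 1) ^ 2 = ((n - 1) ^ 2 : ℕ) := by
    push_cast [Nat.one_le_iff_ne_zero.2 hn]; ring
  have hexpM : (3 : ℝ) - 3 / n = ((3 * n - 3 : ℕ) : ℝ) / n := by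
    rw [Nat.cast_sub (by omega)]; field_simp; push_cast; ring
  have h3 : Real.sqrt 3 * δ ≤ 2 * δ := by
    gcongr
    rw [Real.sqrt_le_left (by norm_num)]
    norm_num
  have hsplit : n * (n - 1) + 1 = (n - 1) ^ 2 + n := by
    obtain ⟨d, rfl⟩ : ∃ d, n = d + 1 := ⟨n - 1, by omega⟩
    simp only [Nat.add_sub_cancel]; ring
  refine le_of_pow_le_pow_left₀ hn (by positivity) ?_
  rw [div_pow, mul_pow, mul_pow, mul_pow, hroot _ hm, hroot _ (by norm_num), hexpM,
    hroot _ hM, hroot _ (by positivity), hexp2, Real.rpow_one, Real.rpow_one,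
    Real.rpow_natCast, Real.rpow_natCast, le_div_iff₀ (by positivity)]
  calc Y ^ n * (Real.sqrt 3 * δ) ≤ 2 * (Y ^ n * δ) := by nlinarith [pow_nonneg hY n]
    _ ≤ 2 ^ (n * (n - 1) + 1) * m * M ^ (3 * n - 3) := by rw [pow_succ]; nlinarith
    _ = 2 ^ n * m * 2 ^ ((n - 1) ^ 2) * M ^ (3 * n - 3) := by rw [hsplit, pow_add]; ring
    _ ≤ ((n : ℝ) + 1) ^ n * m * 2 ^ ((n - 1) ^ 2) * M ^ (3 * n - 3) := by
        gcongr
        have : (1 : ℝ) ≤ n := Nat.one_le_cast.2 (by omega)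
        linarith

theorem related_to_nonreal_root_bound_general (n : ℕ) (a0 : ℤ) (ha0 : a0 ≠ 0)
    (α : Fin n → ℂ) (f : Polynomial ℤ) (hdeg : f.natDegree = n) (hirr : Irreducible f)
    (hf : f.map (Int.castRingHom ℂ) = C (a0 : ℂ) * ∏ i, (X - C (α i)))
    (D : ℂ)
    (hD : D = (a0 : ℂ) ^ (2 * n - 2) *
      ∏ p ∈ Finset.univ.filter (fun p : Fin n × Fin n => p.1 < p.2), (α p.1 - α p.2) ^ 2)
    (M : ℝ) (hM : M = |(a0 : ℝ)| * ∏ i, max 1 (‖α i‖))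
    (m : ℤ) (k : Fin n) (hk : (α k).im ≠ 0)
    (x y : ℤ)
    (hF : ‖(a0 : ℂ) * ∏ j, ((x : ℂ) - α j * (y : ℂ))‖ ≤ (m : ℝ))
    (hrel : ∀ j : Fin n,
      ‖(x : ℂ) - α k * (y : ℂ)‖ ≤ ‖(x : ℂ) - α j * (y : ℂ)‖) :
    |(y : ℝ)| ≤ ((n : ℝ) + 1) * (m : ℝ) ^ ((1 : ℝ) / n) *
        (2 : ℝ) ^ (((n : ℝ) - 1) ^ 2 / n) * M ^ ((3 : ℝ) - 3 / n) /
      (Real.sqrt 3 * ‖D‖) ^ ((1 : ℝ) / n) := by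
  obtain ⟨j, hj⟩ := exists_eq_conj_of_map_eq_C_mul_prod (Int.cast_ne_zero.2 ha0) hf k
  have hjk : j ≠ k := by rintro rfl; exact hk (Complex.conj_eq_iff_im.1 hj.symm)
  have hn : 1 < n := by simpa using Fintype.one_lt_card_iff.2 ⟨j, k, hjk⟩
  have hDpos : 0 < ‖D‖ := by
    rw [hD]
    exact norm_pos_iff.2 (mul_ne_zero (pow_ne_zero _ (Int.cast_ne_zero.2 ha0))
      (prod_filter_lt_sq_sub_ne_zero (injective_of_map_eq_C_mul_prod hirr (by omega) hf)))
  have hdisc := norm_prod_filter_lt_sq_sub_le α k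
  have hrelated := abs_im_mul_pow_mul_prod_le_of_related α k x y (by simpa using hrel)
  have hconj := prod_norm_sub_erase_le_of_conj α hjk hj
  simp only [Fintype.card_fin, Complex.ofReal_intCast] at hdisc hrelated hconj
  have hFm : |(a0 : ℝ)| * ∏ j, ‖(x : ℂ) - α j * y‖ ≤ m := by
    simpa [norm_mul, norm_prod] using hF
  have key : |(y : ℝ)| ^ n * ‖D‖ ≤ 2 ^ (n * (n - 1)) * m * M ^ (3 * n - 3) := by
    rw [hM]
    refine pow_mul_le_of_disc_bounds hn (by exact_mod_cast Int.one_le_abs ha0) (abs_pos.2 hk)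
      (abs_nonneg _) (prod_nonneg fun _ _ => norm_nonneg _)
      (one_le_prod fun _ _ => le_max_left _ _) ?_ ?_ hconj
    · rw [hD, norm_mul, norm_pow, Complex.norm_intCast]
      gcongr
    · calc _ ≤ |(a0 : ℝ)| * (2 ^ (n - 1) * ∏ j, ‖(x : ℂ) - α j * y‖) := by gcongr
        _ ≤ 2 ^ (n - 1) * m := by rw [mul_left_comm]; gcongr
  exact le_rpow_bound_of_pow_mul_le (by omega) (abs_nonneg _) hDpos ((norm_nonneg _).trans hF)
    (hM ▸ by positivity) key

/-- Let `F(x,y) = a₀ ∏ (x - α_j y)` be an irreducible binary form of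
degree `n ≥ 3` with integer coefficients, discriminant `D` and Mahler measure `M(F)`.
Let `α_k` be a non-real root of `F(X,1)`, let `m ≥ 1` be an integer, and suppose
`(x,y) ∈ ℤ²` satisfies `|F(x,y)| ≤ m` and is related to `α_k`, i.e.
`|x - α_k y| = min_j |x - α_j y|`.  Then
`|y| ≤ (n+1) m^(1/n) 2^((n-1)²/n) M(F)^(3-3/n) / (√3 |D|)^(1/n)`. -/
theorem related_to_nonreal_root_bound (n : ℕ) (hn : 3 ≤ n) (a0 : ℤ) (ha0 : a0 ≠ 0)
    (α : Fin n → ℂ) (f : Polynomial ℤ) (hdeg : f.natDegree = n) (hirr : Irreducible f)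
    (hf : f.map (Int.castRingHom ℂ) = C (a0 : ℂ) * ∏ i, (X - C (α i)))
    (D : ℂ)
    (hD : D = (a0 : ℂ) ^ (2 * n - 2) *
      ∏ p ∈ Finset.univ.filter (fun p : Fin n × Fin n => p.1 < p.2), (α p.1 - α p.2) ^ 2)
    (M : ℝ) (hM : M = |(a0 : ℝ)| * ∏ i, max 1 (‖α i‖))
    (m : ℤ) (hm : 0 < m) (k : Fin n) (hk : (α k).im ≠ 0)
    (x y : ℤ)
    (hF : ‖(a0 : ℂ) * ∏ j, ((x : ℂ) - α j * (y : ℂ))‖ ≤ (m : ℝ))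
    (hrel : ∀ j : Fin n,
      ‖(x : ℂ) - α k * (y : ℂ)‖ ≤ ‖(x : ℂ) - α j * (y : ℂ)‖) :
    |(y : ℝ)| ≤ ((n : ℝ) + 1) * (m : ℝ) ^ ((1 : ℝ) / n) *
        (2 : ℝ) ^ (((n : ℝ) - 1) ^ 2 / n) * M ^ ((3 : ℝ) - 3 / n) /
      (Real.sqrt 3 * ‖D‖) ^ ((1 : ℝ) / n) :=
  related_to_nonreal_root_bound_general n a0 ha0 α f hdeg hirr hf D hD M hM m k hk x y hF hrel
end

section
/- Let α_1, ..., α_n be distinct complex numbers, fix α_n, and for t ∈ ℝ with t ≠ α_i for all i, define β_i = α_i for i ≤ n-1 and β_i = α_{i-n+1} for i ≥ n. Then Σ_{k=1}^{n-2} Σ_{i=1}^{n-1} (log |(t - β_i)(α_n - β_{i+k}) / ((α_n - β_i)(t - β_{i+k}))|)² = (2n-2) · ‖Σ_{i=1}^{n-1} log(|t - α_i|/|α_n - α_i|) c_i‖², where c_1, ..., c_{n-1} ∈ ℝ^n are defined by c_i = b_i + (1/(n-1)) b_n with b_i = (1/n)(-1,...,-1, n-1, -1,...,-1) (the entry n-1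 in position i). -/
/-!
Put `L i = log (‖t - α i‖ / ‖α n - α i‖)` for `1 ≤ i ≤ n - 1`. Since `β` is the
`(n - 1)`-periodic extension of `α`, the `(k, i)` summand on the left is `(L i - L j) ^ 2` with
`j ≡ i + k (mod n - 1)`, so the left side runs over all ordered pairs `i ≠ j` and equals
`2 (n - 1) ∑ i, (L i - L̄) ^ 2`, `L̄` being the mean of the `L i`. On the right,
`c i = e i - (n - 1)⁻¹ (e 1 + ⋯ + e (n - 1))`, so `∑ i, L i • c i` has coordinates `L j - L̄`
(and `0` in the last one), and its squared norm is the same sum.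
-/

open Finset

def cycShift (M i k : ℕ) : ℕ := if i + k ≤ M then i + k else i + k - M

lemma cycShift_mem_Icc {M i k : ℕ} (hi : i ∈ Icc 1 M) (hk : k ∈ Icc 1 (M - 1)) :
    cycShift M i k ∈ Icc 1 M := by
  simp only [mem_Icc, cycShift] at *; split_ifs <;> omega

lemma sum_cycShift_eq_sum_erase {A : Type*} [AddCommMonoid A] {M i : ℕ} (hi : i ∈ Icc 1 M)
    (g : ℕ → A) : ∑ k ∈ Icc 1 (M - 1), g (cycShift M i k) = ∑ j ∈ (Icc 1 M).erase i, g j := by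
  refine sum_nbij' (cycShift M i) (fun j => if i < j then j - i else j + M - i) ?_ ?_ ?_ ?_
    (fun _ _ => rfl) <;>
    intro a ha <;> simp only [mem_erase, ne_eq, mem_Icc, cycShift] at * <;> split_ifs <;> omega

lemma apply_add_eq_apply_cycShift {X : Type*} {n : ℕ} {α β : ℕ → X}
    (hβ1 : ∀ i, 1 ≤ i → i ≤ n - 1 → β i = α i) (hβ2 : ∀ i, n ≤ i → β i = α (i - n + 1))
    {i k : ℕ} (hi : i ∈ Icc 1 (n - 1)) (hk : k ∈ Icc 1 (n - 2)) :
    β (i + k) = α (cycShift (n - 1) i k) := by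
  simp only [mem_Icc] at hi hk
  unfold cycShift
  split_ifs with h
  · exact hβ1 _ (by omega) h
  · rw [hβ2 _ (by omega)]
    congr 1
    omega

lemma sum_sum_sub_sq_eq {ι : Type*} (s : Finset ι) (x : ι → ℝ) :
    ∑ i ∈ s, ∑ j ∈ s, (x i - x j) ^ 2 =
      2 * #s * ∑ i ∈ s, (x i - (∑ j ∈ s, x j) / #s) ^ 2 := by
  rcases s.eq_empty_or_nonempty with rfl | hs
  · simp
  have hcard : (#s : ℝ) ≠ 0 := by positivity
  simp only [sub_sq, sum_add_distrib, sum_sub_distrib, sum_const, nsmul_eq_mul, ← mul_sum,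
    ← sum_mul, mul_assoc]
  field_simp
  ring

lemma log_norm_mul_div_mul {𝕜 : Type*} [NormedField 𝕜] {a b c d : 𝕜} (ha : a ≠ 0) (hb : b ≠ 0)
    (hc : c ≠ 0) (hd : d ≠ 0) :
    Real.log ‖a * d / (b * c)‖ = Real.log (‖a‖ / ‖b‖) - Real.log (‖c‖ / ‖d‖) := by
  rw [← Real.log_div (by positivity) (by positivity)]
  congr 1
  simp only [norm_div, norm_mul]
  field_simp

lemma sum_fin_ite_add_one_eq_sum_Icc {A : Type*} [AddCommMonoid A] (n : ℕ) (g : ℕ → A) :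
    ∑ j : Fin n, (if (j : ℕ) + 1 = n then 0 else g (j + 1)) = ∑ i ∈ Icc 1 (n - 1), g i := by
  rcases n with _ | m
  · simp
  have hlt (j : Fin m) : (j : ℕ) + 1 ≠ m + 1 := by omega
  simp only [Fin.sum_univ_castSucc, Fin.val_castSucc, Fin.val_last, hlt, if_false, if_true,
    add_zero, Nat.add_sub_cancel]
  rw [Fin.sum_univ_eq_sum_range (fun j => g (j + 1)), range_eq_Ico, sum_Ico_add', zero_add,
    Ico_add_one_right_eq_Icc]

section CenteredBasis

variable {n : ℕ} {b c : ℕ → EuclideanSpace ℝ (Fin n)}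

lemma apply_eq_of_centered_basis
    (hb : ∀ i ∈ Icc 1 n, ∀ j : Fin n,
      b i j = if (j : ℕ) + 1 = i then ((n : ℝ) - 1) / n else -(1 / n))
    (hc : ∀ i ∈ Icc 1 (n - 1), c i = b i + (((n : ℝ) - 1))⁻¹ • b n)
    {i : ℕ} (hi : i ∈ Icc 1 (n - 1)) (j : Fin n) :
    c i j =
      (if (j : ℕ) + 1 = i then 1 else 0) - if (j : ℕ) + 1 = n then 0 else ((n : ℝ) - 1)⁻¹ := by
  have hi' := mem_Icc.mp hi
  have hn : (2 : ℝ) ≤ n := by exact_mod_cast (by omega : 2 ≤ n)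
  rw [hc i hi, PiLp.add_apply, PiLp.smul_apply, hb i (by simp; omega) j, hb n (by simp; omega) j,
    smul_eq_mul]
  have : (n : ℝ) - 1 ≠ 0 := by linarith
  have : (n : ℝ) ≠ 0 := by linarith
  split_ifs <;> first | omega | (field_simp; ring)

lemma sum_smul_apply_eq_of_centered_basis
    (hb : ∀ i ∈ Icc 1 n, ∀ j : Fin n,
      b i j = if (j : ℕ) + 1 = i then ((n : ℝ) - 1) / n else -(1 / n))
    (hc : ∀ i ∈ Icc 1 (n - 1), c i = b i + (((n : ℝ) - 1))⁻¹ • b n) (x : ℕ → ℝ) (j : Fin n) :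
    (∑ i ∈ Icc 1 (n - 1), x i • c i) j =
      if (j : ℕ) + 1 = n then 0 else x (j + 1) - (∑ i ∈ Icc 1 (n - 1), x i) / ((n : ℝ) - 1) := by
  rw [WithLp.ofLp_sum, Finset.sum_apply]
  simp only [PiLp.smul_apply, smul_eq_mul]
  rw [sum_congr rfl fun i hi => by rw [apply_eq_of_centered_basis hb hc hi j]]
  simp only [mul_sub, mul_ite, mul_one, mul_zero, sum_sub_distrib, sum_ite_eq]
  by_cases h : (j : ℕ) + 1 = n
  · have hj : (j : ℕ) + 1 ∉ Icc 1 (n - 1) := by simp only [mem_Icc]; omega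
    rw [if_neg hj]
    simp only [h, if_true, sum_const_zero, sub_zero]
  · have hj : (j : ℕ) + 1 ∈ Icc 1 (n - 1) := by simp only [mem_Icc]; omega
    rw [if_pos hj]
    simp only [h, if_false, ← sum_mul, div_eq_mul_inv]

lemma norm_sq_sum_smul_eq_of_centered_basis
    (hb : ∀ i ∈ Icc 1 n, ∀ j : Fin n,
      b i j = if (j : ℕ) + 1 = i then ((n : ℝ) - 1) / n else -(1 / n))
    (hc : ∀ i ∈ Icc 1 (n - 1), c i = b i + (((n : ℝ) - 1))⁻¹ • b n) (x : ℕ → ℝ) :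
    ‖∑ i ∈ Icc 1 (n - 1), x i • c i‖ ^ 2 =
      ∑ i ∈ Icc 1 (n - 1), (x i - (∑ i ∈ Icc 1 (n - 1), x i) / ((n : ℝ) - 1)) ^ 2 := by
  simp only [EuclideanSpace.real_norm_sq_eq, sum_smul_apply_eq_of_centered_basis hb hc, ite_pow,
    zero_pow two_ne_zero]
  exact sum_fin_ite_add_one_eq_sum_Icc n
    fun i => (x i - (∑ i ∈ Icc 1 (n - 1), x i) / ((n : ℝ) - 1)) ^ 2

end CenteredBasis

theorem distance_identity_general (n : ℕ) (α : ℕ → ℂ)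
    (hdist : ∀ i ∈ Finset.Icc 1 n, ∀ j ∈ Finset.Icc 1 n, i ≠ j → α i ≠ α j)
    (β : ℕ → ℂ)
    (hβ1 : ∀ i, 1 ≤ i → i ≤ n - 1 → β i = α i)
    (hβ2 : ∀ i, n ≤ i → β i = α (i - n + 1))
    (t : ℝ) (ht : ∀ i ∈ Finset.Icc 1 n, (t : ℂ) ≠ α i)
    (b : ℕ → EuclideanSpace ℝ (Fin n))
    (hb : ∀ i ∈ Finset.Icc 1 n, ∀ j : Fin n,
      b i j = if (j : ℕ) + 1 = i then ((n : ℝ) - 1) / n else -(1 / n))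
    (c : ℕ → EuclideanSpace ℝ (Fin n))
    (hc : ∀ i ∈ Finset.Icc 1 (n - 1), c i = b i + (((n : ℝ) - 1))⁻¹ • b n) :
    ∑ k ∈ Finset.Icc 1 (n - 2), ∑ i ∈ Finset.Icc 1 (n - 1),
        (Real.log (‖((t : ℂ) - β i) * (α n - β (i + k)) /
          ((α n - β i) * ((t : ℂ) - β (i + k)))‖)) ^ 2 =
      (2 * (n : ℝ) - 2) *
        ‖∑ i ∈ Finset.Icc 1 (n - 1),
          Real.log (‖(t : ℂ) - α i‖ / ‖α n - α i‖) • c i‖ ^ 2 := by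
  set L : ℕ → ℝ := fun i => Real.log (‖(t : ℂ) - α i‖ / ‖α n - α i‖)
  have hne (i : ℕ) (hi : i ∈ Icc 1 (n - 1)) : (t : ℂ) - α i ≠ 0 ∧ α n - α i ≠ 0 := by
    have hi' := mem_Icc.mp hi
    have hiN : i ∈ Icc 1 n := mem_Icc.mpr ⟨hi'.1, by omega⟩
    exact ⟨sub_ne_zero.mpr (ht i hiN),
      sub_ne_zero.mpr (hdist n (mem_Icc.mpr ⟨by omega, le_rfl⟩) i hiN (by omega))⟩
  have hterm (k : ℕ) (hk : k ∈ Icc 1 (n - 2)) (i : ℕ) (hi : i ∈ Icc 1 (n - 1)) :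
      Real.log (‖((t : ℂ) - β i) * (α n - β (i + k)) /
          ((α n - β i) * ((t : ℂ) - β (i + k)))‖) =
        L i - L (cycShift (n - 1) i k) := by
    have hm : cycShift (n - 1) i k ∈ Icc 1 (n - 1) :=
      cycShift_mem_Icc hi (by rwa [Nat.sub_sub])
    rw [hβ1 i (mem_Icc.mp hi).1 (mem_Icc.mp hi).2, apply_add_eq_apply_cycShift hβ1 hβ2 hi hk]
    exact log_norm_mul_div_mul (hne i hi).1 (hne i hi).2 (hne _ hm).1 (hne _ hm).2
  rcases n.eq_zero_or_pos with rfl | hn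
  · simp
  calc _ = ∑ k ∈ Icc 1 (n - 2), ∑ i ∈ Icc 1 (n - 1), (L i - L (cycShift (n - 1) i k)) ^ 2 :=
        sum_congr rfl fun k hk => sum_congr rfl fun i hi => by rw [hterm k hk i hi]
    _ = ∑ i ∈ Icc 1 (n - 1), ∑ j ∈ Icc 1 (n - 1), (L i - L j) ^ 2 := by
        rw [sum_comm, show n - 2 = n - 1 - 1 by omega]
        refine sum_congr rfl fun i hi => ?_
        rw [sum_cycShift_eq_sum_erase hi fun j => (L i - L j) ^ 2, sum_erase _ (by simp)]
    _ = _ := by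
        rw [sum_sum_sub_sq_eq, norm_sq_sum_smul_eq_of_centered_basis hb hc, Nat.card_Icc]
        push_cast [Nat.add_sub_cancel, Nat.cast_sub hn]
        ring

/-- Let `α₁, …, αₙ` be distinct complex numbers, `t ∈ ℝ` with `t ≠ α_i`
for all `i`, and set `β_i = α_i` for `i ≤ n-1`, `β_i = α_{i-n+1}` for `i ≥ n`.  Then
`Σ_{k=1}^{n-2} Σ_{i=1}^{n-1} (log |(t-β_i)(αₙ-β_{i+k}) / ((αₙ-β_i)(t-β_{i+k}))|)²
  = (2n-2) ‖Σ_{i=1}^{n-1} log(|t-α_i|/|αₙ-α_i|) c_i‖²`,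
where `c_i = b_i + (1/(n-1)) bₙ` and `b_i ∈ ℝⁿ` has entries `-1/n` except `(n-1)/n` in
position `i`. -/
theorem distance_identity (n : ℕ) (hn : 3 ≤ n) (α : ℕ → ℂ)
    (hdist : ∀ i ∈ Finset.Icc 1 n, ∀ j ∈ Finset.Icc 1 n, i ≠ j → α i ≠ α j)
    (β : ℕ → ℂ)
    (hβ1 : ∀ i, 1 ≤ i → i ≤ n - 1 → β i = α i)
    (hβ2 : ∀ i, n ≤ i → β i = α (i - n + 1))
    (t : ℝ) (ht : ∀ i ∈ Finset.Icc 1 n, (t : ℂ) ≠ α i)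
    (b : ℕ → EuclideanSpace ℝ (Fin n))
    (hb : ∀ i ∈ Finset.Icc 1 n, ∀ j : Fin n,
      b i j = if (j : ℕ) + 1 = i then ((n : ℝ) - 1) / n else -(1 / n))
    (c : ℕ → EuclideanSpace ℝ (Fin n))
    (hc : ∀ i ∈ Finset.Icc 1 (n - 1), c i = b i + (((n : ℝ) - 1))⁻¹ • b n) :
    ∑ k ∈ Finset.Icc 1 (n - 2), ∑ i ∈ Finset.Icc 1 (n - 1),
        (Real.log (‖((t : ℂ) - β i) * (α n - β (i + k)) /
          ((α n - β i) * ((t : ℂ) - β (i + k)))‖)) ^ 2 =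
      (2 * (n : ℝ) - 2) *
        ‖∑ i ∈ Finset.Icc 1 (n - 1),
          Real.log (‖(t : ℂ) - α i‖ / ‖α n - α i‖) • c i‖ ^ 2 :=
  distance_identity_general n α hdist β hβ1 hβ2 t ht b hb c hc
end

section
/- Let K be a number field and S a finite set of places of K containing all Archimedean places. Let F(x,y) = a_0 ∏(x - α_k y) ∈ ℤ[x,y] with α_1 generating K, and suppose that a_0 and F(x,y) are S-units in ℤ (i.e., all their prime factors lie below finite places of S). Then for any integers x, y, the element x - α_1 y is an S-unit of K, and Σ_{v ∈ S finite} |log |x - α_1 y|_v| ≤ log |a_0 · F(x,y)|. -/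
open Finset Polynomial NumberField

/-- The order of vanishing of `ρ` at a finite place `v` of a number field. -/
noncomputable def finOrd {K : Type*} [Field K] [NumberField K]
    (v : IsDedekindDomain.HeightOneSpectrum (RingOfIntegers K)) (ρ : K) : ℤ :=
  if h : v.valuation K ρ = 0 then 0 else -Multiplicative.toAdd (WithZero.unzero h)

/-!
Write `β = x - α₁ y` and `ord_v = finOrd v`. Dividing `f` by `X - α₁` over `K` and homogenizing
gives `F(x, y) = β γ`, and Gauss's lemma makes `γ` integral at every finite place; moreover
`a₀ β = a₀ x - (a₀ α₁) y` is integral because `a₀ α₁` is. Hence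
`-ord_v a₀ ≤ ord_v β ≤ ord_v F(x, y)`, so `|ord_v β| ≤ ord_v (a₀ F(x, y))`, which vanishes
outside `S`. Over `S`, the prime powers `𝔭_v ^ ord_v (a₀ F(x, y))` are coprime divisors of the
principal ideal `(a₀ F(x, y))`, whose norm is `|a₀ F(x, y)| ^ [K : ℚ]`; taking logarithms gives
the bound.
-/

namespace Polynomial

section CommRing

variable {R : Type*} [CommRing R]

lemma eval_homogenize_eq_sum (p : R[X]) (n : ℕ) (x y : R) :
    MvPolynomial.eval ![x, y] (p.homogenize n) =
      ∑ k ∈ range (n + 1), p.coeff k * x ^ k * y ^ (n - k) := by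
  simp only [homogenize, Finset.Nat.sum_antidiagonal_eq_sum_range_succ_mk, MvPolynomial.eval_sum]
  refine Finset.sum_congr rfl fun k _ ↦ ?_
  rw [MvPolynomial.eval_monomial, Finsupp.update_eq_add_single, Finsupp.prod_add_index',
    Finsupp.prod_single_index, Finsupp.prod_single_index]
  · simp [mul_assoc]
  all_goals simp [pow_add]

lemma eval_homogenize_X_sub_C (a x y : R) :
    MvPolynomial.eval ![x, y] ((X - C a).homogenize 1) = x - a * y := by
  simp [homogenize_X one_ne_zero, homogenize_C]

variable {Γ₀ : Type*} [LinearOrderedCommMonoidWithZero Γ₀] (v : Valuation R Γ₀)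

lemma valuation_eval_homogenize_le_one {p : R[X]} (hp : ∀ k, v (p.coeff k) ≤ 1) {x y : R}
    (hx : v x ≤ 1) (hy : v y ≤ 1) (n : ℕ) :
    v (MvPolynomial.eval ![x, y] (p.homogenize n)) ≤ 1 := by
  rw [eval_homogenize_eq_sum]
  refine v.map_sum_le fun k _ ↦ ?_
  simp only [map_mul, map_pow]
  exact mul_le_one' (mul_le_one' (hp k) (pow_le_one' hx _)) (pow_le_one' hy _)

lemma coeff_X_sub_C_mul_succ (a : R) (q : R[X]) (k : ℕ) :
    ((X - C a) * q).coeff (k + 1) = q.coeff k - a * q.coeff (k + 1) := by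
  rw [sub_mul, coeff_sub, coeff_X_mul, coeff_C_mul]

lemma coeff_X_sub_C_mul_zero (a : R) (q : R[X]) :
    ((X - C a) * q).coeff 0 = -(a * q.coeff 0) := by
  simp [sub_mul]

/-- Gauss's lemma for a linear factor `p = (X - a) q`. If `v a ≤ 1`, use
`q k = p (k + 1) + a q (k + 1)` downwards from the top; otherwise use
`a q (k + 1) = q k - p (k + 1)` upwards from `a q 0 = -p 0`, dividing by `a`. -/
lemma valuation_coeff_le_one_of_X_sub_C_mul {a : R} {q : R[X]}
    (h : ∀ k, v (((X - C a) * q).coeff k) ≤ 1) (k : ℕ) : v (q.coeff k) ≤ 1 := by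
  rcases le_or_gt (v a) 1 with ha | ha
  · suffices ∀ i j, q.natDegree < i + j → v (q.coeff j) ≤ 1 from this (q.natDegree + 1) k (by omega)
    intro i
    induction i with
    | zero => intro j hj; simp [coeff_eq_zero_of_natDegree_lt (by omega : q.natDegree < j)]
    | succ i ih =>
      intro j hj
      have hq : q.coeff j = ((X - C a) * q).coeff (j + 1) + a * q.coeff (j + 1) := by
        rw [coeff_X_sub_C_mul_succ]; ring
      rw [hq]
      refine (v.map_add _ _).trans (max_le (h _) ?_)
      rw [map_mul]
      exact mul_le_one' ha (ih _ (by omega))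
  · have of_mul : ∀ b, v (a * b) ≤ 1 → v b ≤ 1 := fun b hb ↦ by
      by_contra! hb'
      rw [map_mul] at hb
      exact (ha.trans_le (le_mul_of_one_le_right' hb'.le)).not_ge hb
    induction k with
    | zero =>
      refine of_mul _ ?_
      rw [← neg_neg (a * _), ← coeff_X_sub_C_mul_zero, Valuation.map_neg]
      exact h 0
    | succ k ih =>
      refine of_mul _ ?_
      rw [show a * q.coeff (k + 1) = q.coeff k - ((X - C a) * q).coeff (k + 1) by
        rw [coeff_X_sub_C_mul_succ]; ring]
      exact (v.map_sub _ _).trans (max_le ih (h _))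

end CommRing

end Polynomial

open IsDedekindDomain

section FiniteOrder

variable {K : Type*} [Field K] [NumberField K] (v : HeightOneSpectrum (𝓞 K))

lemma valuation_eq_exp_neg_finOrd {ρ : K} (hρ : ρ ≠ 0) :
    v.valuation K ρ = WithZero.exp (-finOrd v ρ) := by
  have h : v.valuation K ρ ≠ 0 := (v.valuation K).ne_zero_iff.mpr hρ
  simp [finOrd, h, WithZero.exp, WithZero.coe_unzero]

lemma finOrd_nonneg {ρ : K} (hρ : ρ ≠ 0) (h : v.valuation K ρ ≤ 1) : 0 ≤ finOrd v ρ := by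
  rwa [valuation_eq_exp_neg_finOrd v hρ, ← WithZero.exp_zero, WithZero.exp_le_exp,
    Left.neg_nonpos_iff] at h

lemma finOrd_mul {ρ σ : K} (hρ : ρ ≠ 0) (hσ : σ ≠ 0) :
    finOrd v (ρ * σ) = finOrd v ρ + finOrd v σ := by
  have h := map_mul (v.valuation K) ρ σ
  rw [valuation_eq_exp_neg_finOrd v (mul_ne_zero hρ hσ), valuation_eq_exp_neg_finOrd v hρ,
    valuation_eq_exp_neg_finOrd v hσ, ← WithZero.exp_add, WithZero.exp_inj] at h
  omega

lemma finOrd_eq_zero_iff {ρ : K} (hρ : ρ ≠ 0) : finOrd v ρ = 0 ↔ v.valuation K ρ = 1 := by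
  rw [valuation_eq_exp_neg_finOrd v hρ, ← WithZero.exp_zero, WithZero.exp_inj, neg_eq_zero]

lemma valuation_intCast_le_one (m : ℤ) : v.valuation K m ≤ 1 := by
  simpa using v.valuation_le_one (K := K) (m : 𝓞 K)

lemma valuation_le_one_of_isIntegral {z : K} (hz : IsIntegral ℤ z) : v.valuation K z ≤ 1 := by
  simpa [IsIntegralClosure.algebraMap_mk'] using
    v.valuation_le_one (K := K) (IsIntegralClosure.mk' (𝓞 K) z hz)

lemma finOrd_intCast_eq_zero {m : ℤ} (hm : (m : 𝓞 K) ∉ v.asIdeal) : finOrd v (m : K) = 0 := by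
  have h := (v.valuation_eq_one_iff_notMem (K := K)).mpr hm
  simp only [map_intCast] at h
  rwa [finOrd_eq_zero_iff v (by rintro h0; simp_all)]

end FiniteOrder

section Norm

variable {K : Type*} [Field K] [NumberField K]

lemma pow_finOrd_dvd_span_singleton (v : HeightOneSpectrum (𝓞 K)) {r : 𝓞 K} (hr : r ≠ 0) :
    v.asIdeal ^ (finOrd v (r : K)).toNat ∣ Ideal.span {r} := by
  have hrK : (r : K) ≠ 0 := by simpa using hr
  rw [← v.intValuation_le_pow_iff_dvd, ← v.valuation_of_algebraMap (K := K),
    valuation_eq_exp_neg_finOrd v hrK,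
    Int.toNat_of_nonneg (finOrd_nonneg v hrK (v.valuation_le_one r))]

lemma prod_pow_dvd_of_forall_pow_dvd {R : Type*} [CommRing R] [IsDedekindDomain R]
    (S : Finset (HeightOneSpectrum R)) (e : HeightOneSpectrum R → ℕ) {I : Ideal R}
    (h : ∀ v ∈ S, v.asIdeal ^ e v ∣ I) : ∏ v ∈ S, v.asIdeal ^ e v ∣ I := by
  refine Finset.prod_dvd_of_coprime (fun v _ w _ hvw ↦ IsCoprime.pow ?_) h
  rw [Ideal.isCoprime_iff_sup_eq]
  exact v.isMaximal.coprime_of_ne w.isMaximal (mt HeightOneSpectrum.ext hvw)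

lemma prod_absNorm_pow_finOrd_dvd (S : Finset (HeightOneSpectrum (𝓞 K))) {m : ℤ} (hm : m ≠ 0) :
    ∏ v ∈ S, Ideal.absNorm v.asIdeal ^ (finOrd v (m : K)).toNat ∣
      m.natAbs ^ Module.finrank ℚ K := by
  have hm' : (m : 𝓞 K) ≠ 0 := by exact_mod_cast hm
  have h := map_dvd Ideal.absNorm (prod_pow_dvd_of_forall_pow_dvd S _
    fun v _ ↦ pow_finOrd_dvd_span_singleton v hm')
  have hnorm : Algebra.norm ℤ (m : 𝓞 K) = m ^ Module.finrank ℚ K := by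
    rw [← map_intCast (algebraMap ℤ (𝓞 K)), Algebra.norm_algebraMap, RingOfIntegers.rank,
      Int.cast_id]
  simpa [hnorm, Int.natAbs_pow] using h

lemma sum_finOrd_mul_log_absNorm_le (S : Finset (HeightOneSpectrum (𝓞 K))) {m : ℤ} (hm : m ≠ 0) :
    ∑ v ∈ S, (finOrd v (m : K) : ℝ) * Real.log (Ideal.absNorm v.asIdeal) ≤
      Module.finrank ℚ K * Real.log |(m : ℝ)| := by
  have hN : ∀ v : HeightOneSpectrum (𝓞 K), 0 < Ideal.absNorm v.asIdeal := fun v ↦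
    Nat.pos_of_ne_zero (Ideal.absNorm_eq_zero_iff.not.mpr v.ne_bot)
  have hprod := Nat.le_of_dvd (by positivity) (prod_absNorm_pow_finOrd_dvd S hm)
  calc ∑ v ∈ S, (finOrd v (m : K) : ℝ) * Real.log (Ideal.absNorm v.asIdeal)
      = Real.log (∏ v ∈ S, Ideal.absNorm v.asIdeal ^ (finOrd v (m : K)).toNat : ℕ) := by
        rw [Nat.cast_prod, Real.log_prod fun v _ ↦ by have := hN v; positivity]
        refine Finset.sum_congr rfl fun v _ ↦ ?_
        have hmK : (m : K) ≠ 0 := by exact_mod_cast hm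
        have hnat : ((finOrd v (m : K)).toNat : ℝ) = finOrd v (m : K) := by
          exact_mod_cast Int.toNat_of_nonneg (finOrd_nonneg v hmK (valuation_intCast_le_one v m))
        rw [Nat.cast_pow, Real.log_pow, hnat]
    _ ≤ Real.log (m.natAbs ^ Module.finrank ℚ K : ℕ) :=
        Real.log_le_log (mod_cast Finset.prod_pos fun v _ ↦ pow_pos (hN v) _) (mod_cast hprod)
    _ = Module.finrank ℚ K * Real.log |(m : ℝ)| := by
        rw [Nat.cast_pow, Real.log_pow, Nat.cast_natAbs, Int.cast_abs]

end Norm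

section BinaryForm

variable {K : Type*} [Field K] [NumberField K]

lemma exists_eval_homogenize_eq_mul {f : ℤ[X]} {n : ℕ} (hn : 1 ≤ n) (hdeg : f.natDegree ≤ n)
    {α : K} (hroot : aeval α f = 0) (x y : ℤ) :
    ∃ γ : K, (∀ v : HeightOneSpectrum (𝓞 K), v.valuation K γ ≤ 1) ∧
      (MvPolynomial.eval ![x, y] (f.homogenize n) : K) = (x - α * y) * γ := by
  set fK := f.map (algebraMap ℤ K)
  set q := fK /ₘ (X - C α)
  have hfq : (X - C α) * q = fK :=
    mul_divByMonic_eq_iff_isRoot.mpr (by rwa [IsRoot, eval_map, ← aeval_def])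
  have hq : q.natDegree ≤ n - 1 := by
    rw [natDegree_divByMonic _ (monic_X_sub_C α), natDegree_X_sub_C]
    exact Nat.sub_le_sub_right (natDegree_map_le.trans hdeg) 1
  refine ⟨MvPolynomial.eval ![(x : K), y] (q.homogenize (n - 1)), fun v ↦ ?_, ?_⟩
  · refine valuation_eval_homogenize_le_one _ (valuation_coeff_le_one_of_X_sub_C_mul _ (a := α) ?_)
      (valuation_intCast_le_one v x) (valuation_intCast_le_one v y) _
    intro k
    simpa [hfq, fK] using valuation_intCast_le_one v (f.coeff k)
  · have hsum : (MvPolynomial.eval ![x, y] (f.homogenize n) : K) =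
        MvPolynomial.eval ![(x : K), y] (fK.homogenize n) := by
      simp [eval_homogenize_eq_sum, fK]
    have hmul : fK.homogenize n = (X - C α).homogenize 1 * q.homogenize (n - 1) := by
      rw [← hfq, ← homogenize_mul _ _ (natDegree_X_sub_C_le α) hq, Nat.add_sub_cancel' hn]
    rw [hsum, hmul, map_mul, eval_homogenize_X_sub_C]

lemma abs_finOrd_le_finOrd_mul (v : HeightOneSpectrum (𝓞 K)) {a F : ℤ} (ha : a ≠ 0) (hF : F ≠ 0)
    {β γ : K} (hβ : β ≠ 0) (haβ : v.valuation K (a * β) ≤ 1) (hγ : v.valuation K γ ≤ 1)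
    (hFβγ : (F : K) = β * γ) :
    |finOrd v β| ≤ finOrd v ((a * F : ℤ) : K) := by
  have haK : (a : K) ≠ 0 := by exact_mod_cast ha
  have hFK : (F : K) ≠ 0 := by exact_mod_cast hF
  have hγ0 : γ ≠ 0 := right_ne_zero_of_mul (hFβγ ▸ hFK)
  have haβ' := finOrd_nonneg v (mul_ne_zero haK hβ) haβ
  have hγ' := finOrd_nonneg v hγ0 hγ
  have ha' := finOrd_nonneg v haK (valuation_intCast_le_one v a)
  have hF' := finOrd_nonneg v hFK (valuation_intCast_le_one v F)
  have hFβγ' : finOrd v (F : K) = finOrd v β + finOrd v γ := by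
    rw [hFβγ, finOrd_mul v hβ hγ0]
  rw [finOrd_mul v haK hβ] at haβ'
  rw [Int.cast_mul, finOrd_mul v haK hFK, abs_le]
  omega

lemma valuation_leadingCoeff_mul_sub_le_one (v : HeightOneSpectrum (𝓞 K)) {f : ℤ[X]} {α : K}
    (hroot : aeval α f = 0) (x y : ℤ) :
    v.valuation K (f.leadingCoeff * (x - α * y)) ≤ 1 := by
  have hint : IsIntegral ℤ ((f.leadingCoeff : K) * α) := by
    simpa [zsmul_eq_mul] using isIntegral_leadingCoeff_smul f α hroot
  rw [show (f.leadingCoeff : K) * (x - α * y) = ((f.leadingCoeff * x : ℤ) : K) -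
    (f.leadingCoeff * α) * y by push_cast; ring]
  refine (v.valuation K).map_sub_le (valuation_intCast_le_one v _) ?_
  rw [map_mul]
  exact mul_le_one' (valuation_le_one_of_isIntegral v hint) (valuation_intCast_le_one v y)

end BinaryForm

theorem S_unit_bound_general {K : Type*} [Field K] [NumberField K] (n : ℕ) (hn : 1 ≤ n)
    (f : Polynomial ℤ) (hdeg : f.natDegree = n)
    (a0 : ℤ) (ha0 : a0 = f.leadingCoeff) (ha00 : a0 ≠ 0)
    (α₁ : K) (hroot : Polynomial.aeval α₁ f = 0)
    (x y : ℤ) (Fxy : ℤ)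
    (hFxy : Fxy = ∑ k ∈ Finset.range (n + 1), f.coeff k * x ^ k * y ^ (n - k))
    (hFxy0 : Fxy ≠ 0)
    (hβ : (x : K) - α₁ * (y : K) ≠ 0)
    (S : Finset (IsDedekindDomain.HeightOneSpectrum (RingOfIntegers K)))
    (hSunit : ∀ v : IsDedekindDomain.HeightOneSpectrum (RingOfIntegers K), v ∉ S →
      (algebraMap ℤ (RingOfIntegers K)) (a0 * Fxy) ∉ v.asIdeal) :
    (∀ v : IsDedekindDomain.HeightOneSpectrum (RingOfIntegers K), v ∉ S →
        v.valuation K ((x : K) - α₁ * (y : K)) = 1) ∧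
      ∑ v ∈ S, |(finOrd v ((x : K) - α₁ * (y : K)) : ℝ) *
          Real.log (Ideal.absNorm v.asIdeal)| / (Module.finrank ℚ K : ℝ) ≤
        Real.log |((a0 * Fxy : ℤ) : ℝ)| := by
  obtain ⟨γ, hγ, hFγ⟩ := exists_eval_homogenize_eq_mul hn hdeg.le hroot x y
  rw [eval_homogenize_eq_sum, ← hFxy] at hFγ
  have hord : ∀ v, |finOrd v ((x : K) - α₁ * y)| ≤ finOrd v ((a0 * Fxy : ℤ) : K) := fun v ↦
    abs_finOrd_le_finOrd_mul v ha00 hFxy0 hβ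
      (ha0 ▸ valuation_leadingCoeff_mul_sub_le_one v hroot x y) (hγ v) hFγ
  refine ⟨fun v hv ↦ ?_, ?_⟩
  · have h0 := finOrd_intCast_eq_zero (m := a0 * Fxy) v (by simpa using hSunit v hv)
    rw [← finOrd_eq_zero_iff v hβ]
    exact abs_nonpos_iff.mp (h0 ▸ hord v)
  · have hlog : ∀ v : HeightOneSpectrum (𝓞 K), 0 ≤ Real.log (Ideal.absNorm v.asIdeal) :=
      fun v ↦ Real.log_natCast_nonneg _
    rw [← Finset.sum_div, div_le_iff₀' (mod_cast Module.finrank_pos)]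
    refine (Finset.sum_le_sum fun v _ ↦ ?_).trans
      (sum_finOrd_mul_log_absNorm_le S (mul_ne_zero ha00 hFxy0))
    rw [abs_mul, abs_of_nonneg (hlog v)]
    exact mul_le_mul_of_nonneg_right (mod_cast hord v) (hlog v)

/-- Let `K` be a number field and `S` a finite set of places of `K`
containing all Archimedean places (represented here by a finite set of finite places;
the Archimedean condition is automatic).  Let `F(x,y)` be the binary form of degree `n`
with integer coefficients associated to an irreducible `f ∈ ℤ[X]` with leading
coefficient `a₀` and root `α₁` generating `K`.  If `a₀` and `F(x,y)` are `S`-units in `ℤ`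
(all their prime factors lie below finite places of `S`), then `x - α₁ y` is an `S`-unit
of `K` and `Σ_{v ∈ S finite} |log |x - α₁ y|_v| ≤ log |a₀ F(x,y)|`, where
`|ρ|_v = N(𝔭_v)^(-ord_v(ρ)/d)` is the normalized absolute value at `v` and `d = [K:ℚ]`. -/
theorem S_unit_bound {K : Type*} [Field K] [NumberField K] (n : ℕ) (hn : 1 ≤ n)
    (f : Polynomial ℤ) (hdeg : f.natDegree = n) (hirr : Irreducible f)
    (a0 : ℤ) (ha0 : a0 = f.leadingCoeff) (ha00 : a0 ≠ 0)
    (α₁ : K) (hroot : Polynomial.aeval α₁ f = 0)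
    (hgen : (minpoly ℚ α₁).natDegree = n)
    (x y : ℤ) (Fxy : ℤ)
    (hFxy : Fxy = ∑ k ∈ Finset.range (n + 1), f.coeff k * x ^ k * y ^ (n - k))
    (hFxy0 : Fxy ≠ 0)
    (hβ : (x : K) - α₁ * (y : K) ≠ 0)
    (S : Finset (IsDedekindDomain.HeightOneSpectrum (RingOfIntegers K)))
    (hSunit : ∀ v : IsDedekindDomain.HeightOneSpectrum (RingOfIntegers K), v ∉ S →
      (algebraMap ℤ (RingOfIntegers K)) (a0 * Fxy) ∉ v.asIdeal) :
    (∀ v : IsDedekindDomain.HeightOneSpectrum (RingOfIntegers K), v ∉ S →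
        v.valuation K ((x : K) - α₁ * (y : K)) = 1) ∧
      ∑ v ∈ S, |(finOrd v ((x : K) - α₁ * (y : K)) : ℝ) *
          Real.log (Ideal.absNorm v.asIdeal)| / (Module.finrank ℚ K : ℝ) ≤
        Real.log |((a0 * Fxy : ℤ) : ℝ)| :=
  S_unit_bound_general n hn f hdeg a0 ha0 ha00 α₁ hroot x y Fxy hFxy hFxy0 hβ S hSunit
end
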